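/- arXiv:1805.07811 — 9 statements merged into one kernel-verified Lean document; each statement's English description precedes it below -/
import Mathlib

section
/- There exists a nonnegative integer n₀ such that the sequence (T_n)_{n ≥ n₀} is the sequence of best approximations of the vector (1/β, 1/β²) for the Rauzy norm 𝒩; that is, there exists n₀ such that for every n ≥ n₀ and every integer q with 0 < q < T_n one has 𝒩₀(T_n·(1/β, 1/β²)) < 𝒩₀(q·(1/β, 1/β²)). -/
/-!
For integers `q, k, m` put `η(x) = q x² + k x + m`. Since `1/β = αᾱ`, the Rauzy norm of
`q (1/β, 1/β²)` minus an integer point is `|α| |η(α)|` for some `(k, m)`, and every `(k, m)`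
occurs; for `q = T_n`, reducing `x^(n+2)` modulo the cubic makes it `|α|^(n+3)`.
For `0 < q < T_n` the integer `η(β) η(α) η(ᾱ)` is nonzero because the cubic is irreducible over `ℚ`,
so `|η(β)| |η(α)|² ≥ 1`. Lagrange interpolation at `β, α, ᾱ` gives
`|η(β) - q |β - α|²| ≤ c |η(α)|` with `c = 2 |β - α| / |α - ᾱ|`; applied to `x^(n+2)` it bounds
`T_n |β - α|²` by `β^(n+2) + c |α|^(n+2)`. As `|α|² β = 1`, once `|α|^(n+2)` is small these keep
`|η(α)|` above a fixed `t > |α|^(n+2)` for all `(k, m)`, which survives passing to the infimum.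
-/

open scoped BigOperators

/-- The recurrent integer sequence `T` with `T 0 = 1`, `T 1 = a`, `T 2 = a² + b`,
`T (n+3) = a T(n+2) + b T(n+1) + T n`. -/
def Tseq (a b : ℤ) : ℕ → ℤ
  | 0 => 1
  | 1 => a
  | 2 => a ^ 2 + b
  | n + 3 => a * Tseq a b (n + 2) + b * Tseq a b (n + 1) + Tseq a b n

/-- The comparison word `(a-1)(a+b-1)(a+b)(a+b)⋯`. -/
def ruleWord (a b : ℤ) : ℕ → ℤ
  | 0 => a - 1
  | 1 => a + b - 1
  | _ + 2 => a + b

/-- The word `d j, d (j-1), …, d (j-k)` is lexicographically ≤ the word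
`ruleWord 0, …, ruleWord k`. -/
def WordLe (a b : ℤ) (d : ℕ → ℕ) (j k : ℕ) : Prop :=
  (∀ i ≤ k, (d (j - i) : ℤ) = ruleWord a b i) ∨
    ∃ m ≤ k, (∀ i < m, (d (j - i) : ℤ) = ruleWord a b i) ∧ (d (j - m) : ℤ) < ruleWord a b m

/-- Every finite factor `d j ⋯ d (j-k)` is lexicographically ≤ `(a-1)(a+b-1)(a+b)⋯(a+b)`. -/
def AdmissibleWord (a b : ℤ) (d : ℕ → ℕ) : Prop :=
  ∀ j k : ℕ, k ≤ j → WordLe a b d j k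

/-- An admissible finitely supported digit sequence. -/
def IsAdmissible (a b : ℤ) (d : ℕ → ℕ) : Prop :=
  (Function.support d).Finite ∧ AdmissibleWord a b d

/-- The Rauzy norm `𝒩(x₁,x₂) = |(α + b/β)x₁ + x₂/β|`. -/
noncomputable def rnorm (b : ℤ) (β : ℝ) (α : ℂ) (x : Fin 2 → ℝ) : ℝ :=
  ‖(α + (b : ℂ) / (β : ℂ)) * (x 0 : ℂ) + (x 1 : ℂ) / (β : ℂ)‖

/-- `𝒩₀(w) = inf {𝒩(w - p) : p ∈ ℤ²}`. -/
noncomputable def rnorm0 (b : ℤ) (β : ℝ) (α : ℂ) (w : Fin 2 → ℝ) : ℝ :=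
  sInf {r | ∃ g : Fin 2 → ℤ, r = rnorm b β α (w - fun i => (g i : ℝ))}

/-- `δ(N) = N(1/β, 1/β²) − (Σ_{j≥1} d_j T_{j-1}, Σ_{j≥2} d_j T_{j-2})`. -/
noncomputable def deltaVec (a b : ℤ) (β : ℝ) (N : ℕ) (d : ℕ → ℕ) : Fin 2 → ℝ :=
  ![(N : ℝ) / β - ∑ᶠ j : ℕ, (d (j + 1) : ℝ) * (Tseq a b j : ℝ),
    (N : ℝ) / β ^ 2 - ∑ᶠ j : ℕ, (d (j + 2) : ℝ) * (Tseq a b j : ℝ)]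

/-- The matrix `B`. -/
noncomputable def Bmat (b : ℤ) (β : ℝ) : Matrix (Fin 2) (Fin 2) ℝ :=
  !![-b / β, -1 / β; 1 - b / β ^ 2, -1 / β ^ 2]

/-- The Rauzy fractal `𝓡 = {Σ_{i≥2} d_i α^i}` over admissible digit sequences,
where the digit sequence `(d_i)_{i≥2}` is encoded as `i ↦ d (i+2)`. -/
def RauzyFractal (a b : ℤ) (α : ℂ) : Set ℂ :=
  {z | ∃ d : ℕ → ℕ, AdmissibleWord a b d ∧ z = ∑' i : ℕ, (d i : ℂ) * α ^ (i + 2)}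

open Polynomial ComplexConjugate

lemma cubic_vieta {F : Type*} [Field F] {a b c x y z : F} (hxy : x ≠ y) (hxz : x ≠ z)
    (hyz : y ≠ z) (hx : x ^ 3 = a * x ^ 2 + b * x + c) (hy : y ^ 3 = a * y ^ 2 + b * y + c)
    (hz : z ^ 3 = a * z ^ 2 + b * z + c) :
    x + y + z = a ∧ x * y + x * z + y * z = -b ∧ x * y * z = c := by
  have hxy' : x ^ 2 + x * y + y ^ 2 = a * (x + y) + b := by
    apply mul_left_cancel₀ (sub_ne_zero.mpr hxy); linear_combination hx - hy
  have hxz' : x ^ 2 + x * z + z ^ 2 = a * (x + z) + b := by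
    apply mul_left_cancel₀ (sub_ne_zero.mpr hxz); linear_combination hx - hz
  have h₁ : x + y + z = a := by
    apply mul_left_cancel₀ (sub_ne_zero.mpr hyz); linear_combination hxy' - hxz'
  have h₂ : x * y + x * z + y * z = -b := by linear_combination (x + y) * h₁ - hxy'
  exact ⟨h₁, h₂, by linear_combination hx - x ^ 2 * h₁ + x * h₂⟩

lemma pow_add_four_eq {R : Type*} [CommRing R] {a b : ℤ} {x : R}
    (hx : x ^ 3 = a * x ^ 2 + b * x + 1) (n : ℕ) :
    x ^ (n + 4) = Tseq a b (n + 2) * x ^ 2 + (b * Tseq a b (n + 1) + Tseq a b n : ℤ) * x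
      + Tseq a b (n + 1) := by
  induction n with
  | zero => simp only [Tseq]; push_cast; linear_combination (x + a) * hx
  | succ n ih =>
    rw [pow_succ, ih]
    simp only [Tseq]; push_cast
    linear_combination (Tseq a b (n + 2) : R) * hx

lemma exists_pow_add_two_eq {R : Type*} [CommRing R] (a b : ℤ) (n : ℕ) :
    ∃ k m : ℤ, ∀ x : R, x ^ 3 = a * x ^ 2 + b * x + 1 →
      x ^ (n + 2) = Tseq a b n * x ^ 2 + k * x + m := by
  match n with
  | 0 => exact ⟨0, 0, fun x _ => by simp [Tseq]⟩
  | 1 => exact ⟨b, 1, fun x hx => by simpa [Tseq] using hx⟩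
  | n + 2 => exact ⟨_, _, fun x hx => pow_add_four_eq hx n⟩

lemma eq_one_or_eq_neg_one_of_cubic_root (a b : ℤ) {x : ℚ}
    (hx : x ^ 3 = a * x ^ 2 + b * x + 1) : x = 1 ∨ x = -1 := by
  have hmonic : (X ^ 3 - C a * X ^ 2 - C b * X - 1 : ℤ[X]).Monic := by monicity!
  obtain ⟨t, rfl, -⟩ := exists_integer_of_is_root_of_monic hmonic
    (r := x) (by simp; linear_combination hx)
  have ht : t * (t ^ 2 - a * t - b) = 1 := by
    have : (t : ℚ) * (t ^ 2 - a * t - b) = 1 := by simp at hx ⊢; linear_combination hx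
    exact_mod_cast this
  rcases Int.eq_one_or_neg_one_of_mul_eq_one ht with rfl | rfl <;> simp

noncomputable def cubicPoly (a b : ℤ) : ℚ[X] := X ^ 3 - C (a : ℚ) * X ^ 2 - C (b : ℚ) * X - 1

lemma irreducible_cubicPoly {a b : ℤ} (h₁ : a + b ≠ 0) (h₂ : b ≠ a + 2) :
    Irreducible (cubicPoly a b) := by
  have hdeg : (cubicPoly a b).natDegree = 3 := by
    unfold cubicPoly; compute_degree!
  rw [irreducible_iff_roots_eq_zero_of_degree_le_three (by omega) (by omega),
    Multiset.eq_zero_iff_forall_notMem]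
  intro x hx
  rw [mem_roots (ne_zero_of_natDegree_gt (n := 0) (by omega))] at hx
  have hx' : x ^ 3 = a * x ^ 2 + b * x + 1 := by
    simp only [cubicPoly, IsRoot, eval_sub, eval_pow, eval_X, eval_mul, eval_C, eval_one] at hx
    linear_combination hx
  rcases eq_one_or_eq_neg_one_of_cubic_root a b hx' with rfl | rfl
  · exact h₁ (by exact_mod_cast (by linear_combination -hx' : (a : ℚ) + b = 0))
  · exact h₂ (by exact_mod_cast (by linear_combination hx' : (b : ℚ) = a + 2))

def quad {R : Type*} [CommRing R] (q k m : ℤ) (x : R) : R := q * x ^ 2 + k * x + m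

lemma quad_ne_zero {a b : ℤ}
    (hP : Irreducible (cubicPoly a b)) {x : ℂ}
    (hx : x ^ 3 = a * x ^ 2 + b * x + 1) {q : ℤ} (hq : q ≠ 0) (k m : ℤ) :
    quad q k m x ≠ 0 := by
  have hmin : cubicPoly a b = minpoly ℚ x :=
    minpoly.eq_of_irreducible_of_monic hP (by simp [cubicPoly]; linear_combination hx)
      (by unfold cubicPoly; monicity!)
  set g : ℚ[X] := C (q : ℚ) * X ^ 2 + C (k : ℚ) * X + C (m : ℚ)
  have hg : g ≠ 0 := fun h => hq <| by
    have h2 := congrArg (coeff · 2) h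
    simp only [g, coeff_add, coeff_C_mul, coeff_X_pow, coeff_X, coeff_C, coeff_zero] at h2
    exact_mod_cast (by simpa using h2 : (q : ℚ) = 0)
  intro hηx
  have hle := minpoly.degree_le_of_ne_zero ℚ x hg (by simpa [g, quad] using hηx)
  have hdeg : (cubicPoly a b).degree = 3 := by
    unfold cubicPoly; compute_degree!
  rw [← hmin, hdeg] at hle
  exact absurd (hle.trans degree_quadratic_le) (by decide)

/-- The product of `q X² + k X + m` over the three roots of `X³ - a X² - b X - 1`. -/
def quadNorm (a b q k m : ℤ) : ℤ :=
  m ^ 3 + a * k * m ^ 2 - b * k ^ 2 * m + k ^ 3 + a ^ 2 * q * m ^ 2 + 2 * b * q * m ^ 2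
    - a * b * q * k * m - 3 * q * k * m + a * q * k ^ 2 + b ^ 2 * q ^ 2 * m - 2 * a * q ^ 2 * m
    - b * q ^ 2 * k + q ^ 3

lemma quad_mul_quad_mul_quad {R : Type*} [CommRing R] {a b : ℤ} {x y z : R}
    (h₁ : x + y + z = a) (h₂ : x * y + x * z + y * z = -b) (h₃ : x * y * z = 1) (q k m : ℤ) :
    quad q k m x * quad q k m y * quad q k m z = quadNorm a b q k m := by
  set s₁ := x + y + z
  set s₂ := x * y + x * z + y * z
  set s₃ := x * y * z
  have hsymm : quad q k m x * quad q k m y * quad q k m z =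
      m ^ 3 + s₁ * k * m ^ 2 + s₂ * k ^ 2 * m + s₃ * k ^ 3 + s₁ ^ 2 * q * m ^ 2
        - 2 * s₂ * q * m ^ 2 + s₁ * s₂ * q * k * m - 3 * s₃ * q * k * m + s₁ * s₃ * q * k ^ 2
        + s₂ ^ 2 * q ^ 2 * m - 2 * s₁ * s₃ * q ^ 2 * m + s₂ * s₃ * q ^ 2 * k + s₃ ^ 2 * q ^ 3 := by
    simp only [quad, s₁, s₂, s₃]; ring
  rw [hsymm, h₁, h₂, h₃, quadNorm]; push_cast; ring

lemma quad_conj (q k m : ℤ) (z : ℂ) : quad q k m (conj z) = conj (quad q k m z) := by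
  simp [quad]

lemma ofReal_ne_of_ne_conj {α : ℂ} (hα : α ≠ conj α) (x : ℝ) : (x : ℂ) ≠ α := by
  rintro rfl
  exact hα (Complex.conj_ofReal x).symm

lemma one_le_norm_quad_mul_norm_quad_sq {a b : ℤ}
    (hP : Irreducible (cubicPoly a b)) {x α : ℂ}
    (hx : x ^ 3 = a * x ^ 2 + b * x + 1) (hα : α ^ 3 = a * α ^ 2 + b * α + 1)
    (hxα : x ≠ α) (hxα' : x ≠ conj α) (hα' : α ≠ conj α) {q : ℤ} (hq : q ≠ 0) (k m : ℤ) :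
    1 ≤ ‖quad q k m x‖ * ‖quad q k m α‖ ^ 2 := by
  have hα'' : conj α ^ 3 = a * conj α ^ 2 + b * conj α + 1 := by
    simpa using congrArg conj hα
  obtain ⟨h₁, h₂, h₃⟩ := cubic_vieta hxα hxα' hα' hx hα hα''
  have hN : quadNorm a b q k m ≠ 0 := by
    rw [← Int.cast_ne_zero (α := ℂ), ← quad_mul_quad_mul_quad h₁ h₂ h₃]
    exact mul_ne_zero (mul_ne_zero (quad_ne_zero hP hx hq k m) (quad_ne_zero hP hα hq k m))
      (quad_ne_zero hP hα'' hq k m)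
  calc (1 : ℝ) ≤ ‖(quadNorm a b q k m : ℂ)‖ := by
        rw [Complex.norm_intCast]; exact_mod_cast Int.one_le_abs hN
    _ = ‖quad q k m x‖ * ‖quad q k m α‖ ^ 2 := by
        rw [← quad_mul_quad_mul_quad h₁ h₂ h₃, quad_conj, norm_mul, norm_mul, Complex.norm_conj]
        ring

lemma quad_lagrange {R : Type*} [CommRing R] (q k m : ℤ) (x y z : R) :
    q * ((x - y) * (x - z) * (y - z)) =
      quad q k m x * (y - z) - quad q k m y * (x - z) + quad q k m z * (x - y) := by
  simp only [quad]; ring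

lemma norm_intCast_mul_sub_quad_le {x : ℝ} {α : ℂ} (hα : α ≠ conj α) (q k m : ℤ) :
    ‖q * ‖(x : ℂ) - α‖ ^ 2 - quad q k m (x : ℂ)‖ ≤
      2 * ‖(x : ℂ) - α‖ / ‖α - conj α‖ * ‖quad q k m α‖ := by
  have hd : 0 < ‖α - conj α‖ := norm_pos_iff.mpr (sub_ne_zero.mpr hα)
  have hconj : (x : ℂ) - conj α = conj ((x : ℂ) - α) := by simp
  have hS : (x - α) * (x - conj α) = (‖(x : ℂ) - α‖ ^ 2 : ℝ) := by
    rw [hconj, Complex.mul_conj, Complex.normSq_eq_norm_sq]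
  have key : (q * ‖(x : ℂ) - α‖ ^ 2 - quad q k m (x : ℂ)) * (α - conj α) =
      quad q k m (conj α) * (x - α) - quad q k m α * (x - conj α) := by
    have := quad_lagrange q k m (x : ℂ) α (conj α)
    rw [hS] at this; push_cast at this; linear_combination this
  rw [div_mul_eq_mul_div, le_div_iff₀ hd, ← norm_mul, key]
  refine (norm_sub_le _ _).trans (le_of_eq ?_)
  rw [norm_mul, norm_mul, quad_conj, Complex.norm_conj, hconj, Complex.norm_conj]
  ring

lemma Tseq_mul_norm_sq_le {a b : ℤ} {β : ℝ} {α : ℂ} (hβ : (β : ℂ) ^ 3 = a * β ^ 2 + b * β + 1)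
    (hα : α ^ 3 = a * α ^ 2 + b * α + 1) (hα' : α ≠ conj α) (n : ℕ) :
    Tseq a b n * ‖(β : ℂ) - α‖ ^ 2 ≤
      β ^ (n + 2) + 2 * ‖(β : ℂ) - α‖ / ‖α - conj α‖ * ‖α‖ ^ (n + 2) := by
  obtain ⟨k, m, hpow⟩ := exists_pow_add_two_eq (R := ℂ) a b n
  have h := norm_intCast_mul_sub_quad_le (x := β) hα' (Tseq a b n) k m
  rw [quad, ← hpow _ hβ, quad, ← hpow _ hα, norm_pow,
    ← Complex.ofReal_pow, ← Complex.ofReal_intCast, ← Complex.ofReal_pow, ← Complex.ofReal_mul,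
    ← Complex.ofReal_sub, Complex.norm_real, Real.norm_eq_abs] at h
  linarith [le_abs_self (Tseq a b n * ‖(β : ℂ) - α‖ ^ 2 - β ^ (n + 2))]

lemma rnorm_sub_intCast {b : ℤ} {β : ℝ} {α : ℂ}
    (h₂ : β * α + β * conj α + α * conj α = -b) (h₃ : β * α * conj α = 1)
    (N : ℤ) (g : Fin 2 → ℤ) :
    rnorm b β α (![N / β, N / β ^ 2] - fun i => (g i : ℝ)) =
      ‖α‖ * ‖quad N (b * g 0 + g 1) (g 0) α‖ := by
  have hinv : (β : ℂ)⁻¹ = α * conj α := inv_eq_of_mul_eq_one_right (by linear_combination h₃)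
  have key : (α + b / β) * ((N / β - g 0 : ℝ) : ℂ) + ((N / β ^ 2 - g 1 : ℝ) : ℂ) / β =
      -α * conj (quad N (b * g 0 + g 1) (g 0) α) := by
    rw [← quad_conj]
    simp only [quad]
    push_cast
    simp only [div_eq_mul_inv, ← inv_pow, hinv]
    linear_combination (N * α * conj α) * (α * conj α * h₂ - (α + conj α) * h₃)
  simp only [rnorm, Pi.sub_apply, Matrix.cons_val_zero, Matrix.cons_val_one, key, norm_mul,
    norm_neg, Complex.norm_conj]

lemma rnorm0_le {b : ℤ} {β : ℝ} {α : ℂ}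
    (h₂ : β * α + β * conj α + α * conj α = -b) (h₃ : β * α * conj α = 1) (N k m : ℤ) :
    rnorm0 b β α ![N / β, N / β ^ 2] ≤ ‖α‖ * ‖quad N k m α‖ := by
  refine csInf_le ⟨0, ?_⟩ ⟨![m, k - b * m], ?_⟩
  · rintro r ⟨g, rfl⟩
    exact norm_nonneg _
  · rw [rnorm_sub_intCast h₂ h₃]
    simp

lemma le_rnorm0 {b : ℤ} {β : ℝ} {α : ℂ}
    (h₂ : β * α + β * conj α + α * conj α = -b) (h₃ : β * α * conj α = 1) {N : ℤ} {t : ℝ}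
    (ht : ∀ k m : ℤ, t ≤ ‖quad N k m α‖) :
    ‖α‖ * t ≤ rnorm0 b β α ![N / β, N / β ^ 2] := by
  refine le_csInf ⟨_, 0, rfl⟩ ?_
  rintro r ⟨g, rfl⟩
  rw [rnorm_sub_intCast h₂ h₃]
  exact mul_le_mul_of_nonneg_left (ht _ _) (norm_nonneg α)

lemma sq_mul_add_lt_one {T q S B c u : ℝ} (hS : 0 ≤ S) (hq : q + 1 ≤ T)
    (hT : T * S ≤ B + c * u) (hB : u ^ 2 * B = 1) (hu : 0 < u) (hsmall : 2 * c * u < S) :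
    u ^ 2 * (q * S + c * u) < 1 := by
  calc u ^ 2 * (q * S + c * u) ≤ u ^ 2 * (B + 2 * c * u - S) := by
        gcongr; nlinarith
    _ = 1 + u ^ 2 * (2 * c * u - S) := by linear_combination hB
    _ < 1 := by nlinarith [pow_pos hu 2]

lemma exists_gt_forall_lt_of_sq_mul_lt_one {P Q u : ℝ} (hP : 0 ≤ P) (hQ : 0 ≤ Q)
    (h : u ^ 2 * (P + Q * u) < 1) :
    ∃ t, u < t ∧ ∀ v, 0 ≤ v → 1 ≤ v ^ 2 * (P + Q * v) → t < v := by
  have hcont : Continuous fun v : ℝ => v ^ 2 * (P + Q * v) := by fun_prop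
  obtain ⟨t, hut, ht⟩ :=
    (hcont.continuousAt.eventually_lt continuousAt_const h).exists_gt
  refine ⟨t, hut, fun v hv hv1 => lt_of_not_ge fun hvt => ?_⟩
  have : v ^ 2 * (P + Q * v) ≤ t ^ 2 * (P + Q * t) := by gcongr
  linarith

lemma one_le_norm_quad_sq_mul_bound {a b : ℤ}
    (hP : Irreducible (cubicPoly a b)) {β : ℝ} {α : ℂ}
    (hβ : (β : ℂ) ^ 3 = a * β ^ 2 + b * β + 1) (hα : α ^ 3 = a * α ^ 2 + b * α + 1)
    (hα' : α ≠ conj α) {q : ℤ} (hq : 0 < q) (k m : ℤ) :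
    1 ≤ ‖quad q k m α‖ ^ 2 *
      (q * ‖(β : ℂ) - α‖ ^ 2 + 2 * ‖(β : ℂ) - α‖ / ‖α - conj α‖ * ‖quad q k m α‖) := by
  have hβα' : (β : ℂ) ≠ conj α := ofReal_ne_of_ne_conj (by simpa [eq_comm] using hα') β
  have hnorm := one_le_norm_quad_mul_norm_quad_sq hP hβ hα (ofReal_ne_of_ne_conj hα' β) hβα'
    hα' hq.ne' k m
  have hinterp : ‖quad q k m (β : ℂ)‖ ≤
      q * ‖(β : ℂ) - α‖ ^ 2 + 2 * ‖(β : ℂ) - α‖ / ‖α - conj α‖ * ‖quad q k m α‖ := by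
    have hqS : ‖(q * ‖(β : ℂ) - α‖ ^ 2 : ℂ)‖ = q * ‖(β : ℂ) - α‖ ^ 2 := by
      norm_cast
      rw [Real.norm_of_nonneg (by positivity)]
    linarith [norm_le_insert (q * ‖(β : ℂ) - α‖ ^ 2 : ℂ) (quad q k m (β : ℂ)),
      norm_intCast_mul_sub_quad_le (x := β) hα' q k m]
  calc 1 ≤ ‖quad q k m (β : ℂ)‖ * ‖quad q k m α‖ ^ 2 := hnorm
    _ ≤ _ := by rw [mul_comm]; gcongr

theorem best_approximations_general
    (a b : ℤ) (hab : -a + 1 ≤ b) (hb : b ≤ -2)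
    (β : ℝ) (hβ : 1 < β) (hβroot : β ^ 3 = a * β ^ 2 + b * β + 1)
    (α : ℂ) (hαim : α.im ≠ 0) (hαroot : α ^ 3 = a * α ^ 2 + b * α + 1) :
    ∃ n₀ : ℕ, ∀ n : ℕ, n₀ ≤ n → ∀ q : ℤ, 0 < q → q < Tseq a b n →
      rnorm0 b β α ![(Tseq a b n : ℝ) / β, (Tseq a b n : ℝ) / β ^ 2] <
        rnorm0 b β α ![(q : ℝ) / β, (q : ℝ) / β ^ 2] := by
  have hβc : (β : ℂ) ^ 3 = a * β ^ 2 + b * β + 1 := by exact_mod_cast hβroot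
  have hα' : α ≠ conj α := fun h => hαim (Complex.conj_eq_iff_im.mp h.symm)
  obtain ⟨-, h₂, h₃⟩ := cubic_vieta (ofReal_ne_of_ne_conj hα' β)
    (ofReal_ne_of_ne_conj (by simpa [eq_comm] using hα') β) hα' hβc hαroot
    (by simpa using congrArg conj hαroot)
  have hA0 : 0 < ‖α‖ := norm_pos_iff.mpr fun h => hαim (by simp [h])
  have hAβ : ‖α‖ ^ 2 * β = 1 := by
    rw [mul_assoc, Complex.mul_conj, Complex.normSq_eq_norm_sq, mul_comm] at h₃
    exact_mod_cast h₃
  have hA1 : ‖α‖ < 1 := by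
    by_contra! h
    nlinarith [one_le_pow₀ (n := 2) h]
  set S := ‖(β : ℂ) - α‖ ^ 2
  set c := 2 * ‖(β : ℂ) - α‖ / ‖α - conj α‖
  have hS : 0 < S := by
    have := norm_pos_iff.mpr (sub_ne_zero.mpr (ofReal_ne_of_ne_conj hα' β)); positivity
  have hc : 0 ≤ c := by positivity
  have hsmall : ∀ᶠ n in Filter.atTop, 2 * c * ‖α‖ ^ (n + 2) < S := by
    have := ((tendsto_pow_atTop_nhds_zero_of_lt_one hA0.le hA1).const_mul (2 * c)).comp
      (Filter.tendsto_add_atTop_nat 2)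
    exact this.eventually (gt_mem_nhds (by simpa using hS))
  obtain ⟨n₀, hn₀⟩ := Filter.eventually_atTop.mp hsmall
  refine ⟨n₀, fun n hn q hq hqT => ?_⟩
  set u := ‖α‖ ^ (n + 2)
  have hβu : u ^ 2 * β ^ (n + 2) = 1 := by
    rw [← pow_mul, mul_comm (n + 2), pow_mul, ← mul_pow, hAβ, one_pow]
  obtain ⟨t, hut, ht⟩ := exists_gt_forall_lt_of_sq_mul_lt_one (by positivity) hc <|
    sq_mul_add_lt_one (q := q) hS.le (by exact_mod_cast hqT)
      (Tseq_mul_norm_sq_le hβc hαroot hα' n) hβu (by positivity) (hn₀ n hn)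
  obtain ⟨k, m, hpow⟩ := exists_pow_add_two_eq (R := ℂ) a b n
  have hP := irreducible_cubicPoly (a := a) (b := b) (by omega) (by omega)
  calc rnorm0 b β α ![(Tseq a b n : ℝ) / β, (Tseq a b n : ℝ) / β ^ 2]
      ≤ ‖α‖ * ‖quad (Tseq a b n) k m α‖ := rnorm0_le h₂ h₃ _ k m
    _ = ‖α‖ * u := by rw [quad, ← hpow α hαroot, norm_pow]
    _ < ‖α‖ * t := by gcongr
    _ ≤ rnorm0 b β α ![(q : ℝ) / β, (q : ℝ) / β ^ 2] :=
      le_rnorm0 h₂ h₃ fun k m =>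
        (ht _ (norm_nonneg _) (one_le_norm_quad_sq_mul_bound hP hβc hαroot hα' hq k m)).le

/-- There exists `n₀` such that `(T n)_{n ≥ n₀}` is the sequence of best approximations
of `(1/β, 1/β²)` for the Rauzy norm. -/
theorem best_approximations
    (a b : ℤ) (hab : -a + 1 ≤ b) (hb : b ≤ -2)
    (β : ℝ) (hβ : 1 < β) (hβroot : β ^ 3 = a * β ^ 2 + b * β + 1)
    (α : ℂ) (hαim : α.im ≠ 0) (hαroot : α ^ 3 = a * α ^ 2 + b * α + 1)
    (hαabs : ‖α‖ < 1) :
    ∃ n₀ : ℕ, ∀ n : ℕ, n₀ ≤ n → ∀ q : ℤ, 0 < q → q < Tseq a b n →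
      rnorm0 b β α ![(Tseq a b n : ℝ) / β, (Tseq a b n : ℝ) / β ^ 2] <
        rnorm0 b β α ![(q : ℝ) / β, (q : ℝ) / β ^ 2] :=
  best_approximations_general a b hab hb β hβ hβroot α hαim hαroot
end

section
/- For all n ≥ 4 one has T_n = (a−1)T_{n−1} + (a+b−1)T_{n−2} + (a+b)(T_{n−3} + T_{n−4} + ⋯ + T_1) + (a+b+1)T_0. -/
open scoped BigOperators

/-! The recurrence can be rewritten as `T (n+1) - T n = (a-1) T n + b T (n-1) + T (n-2)`, which is
also the increment of the right-hand side when `n` grows by one. So the difference of the two sides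
is constant; at `n = 3` it equals `T 3 - (a-1) T 2 - (a+b-1) T 1 = a + b + 1`. -/

section Recurrence

variable {R : Type*} [CommRing R] {a b : R} {u : ℕ → R}

theorem sub_sum_Icc_eq_of_recurrence
    (hu : ∀ n, u (n + 3) = a * u (n + 2) + b * u (n + 1) + u n) (m : ℕ) :
    u (m + 3) - (a - 1) * u (m + 2) - (a + b - 1) * u (m + 1) - (a + b) * ∑ i ∈ Finset.Icc 1 m, u i =
      u 3 - (a - 1) * u 2 - (a + b - 1) * u 1 := by
  induction m with
  | zero => simp
  | succ m ih =>
    rw [Finset.sum_Icc_succ_top (by omega), hu (m + 1)]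
    linear_combination ih

end Recurrence

theorem Tseq_add_three (a b : ℤ) (n : ℕ) :
    Tseq a b (n + 3) = a * Tseq a b (n + 2) + b * Tseq a b (n + 1) + Tseq a b n :=
  rfl

theorem Tseq_three_sub (a b : ℤ) :
    Tseq a b 3 - (a - 1) * Tseq a b 2 - (a + b - 1) * Tseq a b 1 = (a + b + 1) * Tseq a b 0 := by
  simp only [Tseq]
  ring

theorem Tseq_expansion_general (a b : ℤ)
    (n : ℕ) (hn : 4 ≤ n) :
    Tseq a b n = (a - 1) * Tseq a b (n - 1) + (a + b - 1) * Tseq a b (n - 2) +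
      (a + b) * (∑ i ∈ Finset.Icc 1 (n - 3), Tseq a b i) + (a + b + 1) * Tseq a b 0 := by
  obtain ⟨m, rfl⟩ : ∃ m, n = m + 1 + 3 := ⟨n - 4, by omega⟩
  have h := sub_sum_Icc_eq_of_recurrence (Tseq_add_three a b) (m + 1)
  rw [Tseq_three_sub] at h
  simp only [Nat.add_sub_cancel, show m + 1 + 3 - 1 = m + 1 + 2 by omega,
    show m + 1 + 3 - 2 = m + 1 + 1 by omega]
  linear_combination h

/-- For all `n ≥ 4`:
`T n = (a−1)T(n−1) + (a+b−1)T(n−2) + (a+b)(T(n−3) + ⋯ + T 1) + (a+b+1)T 0`. -/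
theorem Tseq_expansion (a b : ℤ) (hab : -a + 1 ≤ b) (hb : b ≤ -2)
    (n : ℕ) (hn : 4 ≤ n) :
    Tseq a b n = (a - 1) * Tseq a b (n - 1) + (a + b - 1) * Tseq a b (n - 2) +
      (a + b) * (∑ i ∈ Finset.Icc 1 (n - 3), Tseq a b i) + (a + b + 1) * Tseq a b 0 :=
  Tseq_expansion_general a b n hn
end

section
/- Every nonnegative integer N can be expressed as N = Σ_{i=0}^{∞} d_i T_i where (d_i)_{i≥0} is an admissible finitely supported sequence of nonnegative integers with all d_i ∈ {0, …, a−1}, and this admissible representation is unique. -/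
open scoped BigOperators

/-!
The numeration system of the `T n` is greedy in Fraenkel's sense: a digit sequence is admissible
exactly when every partial sum `∑ i < n, d i * T i` stays below `T n`, and greedy representations
exist and are unique for every increasing base sequence starting at `1`, because each digit is
then recovered by Euclidean division.  The equivalence rests on two facts about the comparison
word `(a-1)(a+b-1)(a+b)(a+b)⋯`: read as digits from position `j` downwards it is worth exactly
`T (j+1) - 1`, while any tail `(a+b)⋯(a+b)` of it, starting at position `p`, is worth less than
`T (p+1)`, since `(a+b) (T 0 + ⋯ + T (p-1)) < T p`.
-/

open Finset

section Greedy

variable {u : ℕ → ℤ} {d e : ℕ → ℕ}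

def digitValue (u : ℕ → ℤ) (d : ℕ → ℕ) (n : ℕ) : ℤ :=
  ∑ i ∈ range n, (d i : ℤ) * u i

def IsGreedy (u : ℕ → ℤ) (d : ℕ → ℕ) : Prop :=
  ∀ n, digitValue u d n < u n

theorem digitValue_zero : digitValue u d 0 = 0 := rfl

theorem digitValue_succ (n : ℕ) :
    digitValue u d (n + 1) = digitValue u d n + d n * u n :=
  sum_range_succ _ _

theorem digitValue_nonneg (hu : ∀ n, 0 ≤ u n) (n : ℕ) : 0 ≤ digitValue u d n :=
  sum_nonneg fun i _ => mul_nonneg (Int.natCast_nonneg _) (hu i)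

theorem digitValue_congr {n : ℕ} (h : ∀ i < n, d i = e i) :
    digitValue u d n = digitValue u e n :=
  sum_congr rfl fun i hi => by rw [h i (mem_range.1 hi)]

theorem digitValue_eq_of_le {n k : ℕ} (hd : ∀ i, n ≤ i → d i = 0) (hk : n ≤ k) :
    digitValue u d k = digitValue u d n := by
  refine (sum_subset (range_subset_range.2 hk) fun i _ hi => ?_).symm
  rw [hd i (by simpa using hi), Nat.cast_zero, zero_mul]

theorem finsum_eq_digitValue {n : ℕ} (hd : ∀ i, n ≤ i → d i = 0) :
    ∑ᶠ i, (d i : ℤ) * u i = digitValue u d n := by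
  refine finsum_eq_sum_of_support_subset _ fun i hi => ?_
  by_contra hin
  exact hi (by simp [hd i (by simpa using hin)])

theorem digitValue_of_prefix (r : ℕ → ℤ) {j : ℕ} :
    ∀ m ≤ j + 1, (∀ i < m, (d (j - i) : ℤ) = r i) →
      digitValue u d (j + 1) = ∑ i ∈ range m, r i * u (j - i) + digitValue u d (j + 1 - m)
  | 0, _, _ => by simp
  | m + 1, hm, h => by
    rw [digitValue_of_prefix r m (by omega) fun i hi => h i (by omega), sum_range_succ,
      show j + 1 - m = j - m + 1 by omega, digitValue_succ, h m (by omega),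
      show j + 1 - (m + 1) = j - m by omega]
    ring

theorem exists_isGreedy (hu0 : u 0 = 1) (hu : Monotone u) :
    ∀ n (N : ℤ), 0 ≤ N → N < u n →
      ∃ d : ℕ → ℕ, (∀ i, n ≤ i → d i = 0) ∧ IsGreedy u d ∧ digitValue u d n = N := by
  have hpos : ∀ n, 0 < u n := fun n => by have := hu n.zero_le; omega
  intro n
  induction n with
  | zero =>
    intro N hN hNu
    rw [hu0] at hNu
    exact ⟨0, fun _ _ => rfl, fun k => by simpa [digitValue] using hpos k, by
      rw [digitValue_zero]; omega⟩
  | succ n ih =>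
    intro N hN hNu
    obtain ⟨e, he0, he, hev⟩ :=
      ih (N % u n) (Int.emod_nonneg _ (hpos n).ne') (Int.emod_lt_of_pos _ (hpos n))
    set d := Function.update e n (N / u n).toNat with hd_def
    have hlow : ∀ k ≤ n, digitValue u d k = digitValue u e k := fun k hk =>
      digitValue_congr fun i hi => by rw [hd_def, Function.update_of_ne (by omega)]
    have hzero : ∀ i, n + 1 ≤ i → d i = 0 := fun i hi => by
      rw [hd_def, Function.update_of_ne (by omega), he0 i (by omega)]
    have hval : digitValue u d (n + 1) = N := by
      rw [digitValue_succ, hlow n le_rfl, hev, hd_def, Function.update_self,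
        Int.toNat_of_nonneg (Int.ediv_nonneg hN (hpos n).le)]
      linarith [Int.mul_ediv_add_emod N (u n)]
    refine ⟨d, hzero, fun k => ?_, hval⟩
    rcases le_or_gt k n with hk | hk
    · rw [hlow k hk]
      exact he k
    · rw [digitValue_eq_of_le hzero hk, hval]
      exact hNu.trans_le (hu hk)

theorem IsGreedy.digit_eq_ediv (hu : ∀ n, 0 < u n) (hd : IsGreedy u d) (n : ℕ) :
    (d n : ℤ) = digitValue u d (n + 1) / u n := by
  rw [digitValue_succ, Int.add_mul_ediv_right _ _ (hu n).ne',
    Int.ediv_eq_zero_of_lt (digitValue_nonneg (fun i => (hu i).le) n) (hd n), zero_add]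

theorem IsGreedy.eq_of_digitValue_eq (hu : ∀ n, 0 < u n) (hd : IsGreedy u d)
    (he : IsGreedy u e) : ∀ n, digitValue u d n = digitValue u e n → ∀ i < n, d i = e i
  | 0, _, i, hi => absurd hi (Nat.not_lt_zero i)
  | n + 1, h, i, hi => by
    have hn : d n = e n := by
      exact_mod_cast (hd.digit_eq_ediv hu n).trans (h ▸ (he.digit_eq_ediv hu n).symm)
    rcases Nat.lt_succ_iff_lt_or_eq.1 hi with hi | rfl
    · refine hd.eq_of_digitValue_eq hu he n ?_ i hi
      rw [digitValue_succ, digitValue_succ, hn] at h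
      linarith
    · exact hn

theorem IsGreedy.eq_of_finsum_eq (hu : ∀ n, 0 < u n) (hd : IsGreedy u d) (he : IsGreedy u e)
    (hdf : (Function.support d).Finite) (hef : (Function.support e).Finite)
    (h : ∑ᶠ i, (d i : ℤ) * u i = ∑ᶠ i, (e i : ℤ) * u i) : d = e := by
  obtain ⟨n, hn⟩ := (hdf.union hef).toFinset.exists_nat_subset_range
  have hout : ∀ i, n ≤ i → d i = 0 ∧ e i = 0 := fun i hi => by
    have : i ∉ (hdf.union hef).toFinset := fun h => (mem_range.1 (hn h)).not_ge hi
    simpa [not_or] using this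
  funext i
  rcases lt_or_ge i n with hi | hi
  · refine hd.eq_of_digitValue_eq hu he n ?_ i hi
    rwa [← finsum_eq_digitValue fun i hi => (hout i hi).1,
      ← finsum_eq_digitValue fun i hi => (hout i hi).2]
  · rw [(hout i hi).1, (hout i hi).2]

end Greedy

section Tseq

variable {a b : ℤ}

theorem Tseq_strictMono (hab : -a + 1 ≤ b) (hb : b ≤ -2) : StrictMono (Tseq a b) := by
  have key : ∀ n, 0 < Tseq a b n ∧ Tseq a b n < Tseq a b (n + 1) ∧
      Tseq a b (n + 1) < Tseq a b (n + 2) := by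
    intro n
    induction n with
    | zero => refine ⟨one_pos, ?_, ?_⟩ <;> simp only [Tseq] <;> nlinarith
    | succ n ih =>
      obtain ⟨h0, h1, h2⟩ := ih
      refine ⟨by linarith, h2, ?_⟩
      show _ < a * _ + b * _ + _
      nlinarith
  exact strictMono_nat_of_lt_succ fun n => (key n).2.1

theorem Tseq_pos (hab : -a + 1 ≤ b) (hb : b ≤ -2) (n : ℕ) : 0 < Tseq a b n :=
  zero_lt_one.trans_le ((Tseq_strictMono hab hb).monotone n.zero_le)

theorem natCast_lt_Tseq (hab : -a + 1 ≤ b) (hb : b ≤ -2) (n : ℕ) : (n : ℤ) < Tseq a b n := by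
  induction n with
  | zero => exact zero_lt_one
  | succ n ih =>
    have := Tseq_strictMono hab hb (show n < n + 1 by omega)
    push_cast
    omega

theorem Tseq_add_two (n : ℕ) :
    Tseq a b (n + 2) = (a - 1) * Tseq a b (n + 1) + (a + b - 1) * Tseq a b n +
      (a + b) * ∑ i ∈ range n, Tseq a b i + 1 := by
  induction n with
  | zero => simp only [Tseq, range_zero, sum_empty]; ring
  | succ n ih =>
    rw [sum_range_succ,
      show Tseq a b (n + 1 + 2) = a * Tseq a b (n + 2) + b * Tseq a b (n + 1) + Tseq a b n from rfl]
    linarith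

theorem mul_sum_range_Tseq_lt (hab : -a + 1 ≤ b) (hb : b ≤ -2) (n : ℕ) :
    (a + b) * ∑ i ∈ range n, Tseq a b i < Tseq a b n := by
  rcases n with _ | _ | n
  · simp [Tseq]
  · simp only [Tseq, zero_add, range_one, sum_singleton, mul_one]
    linarith
  · have hmono := Tseq_strictMono hab hb (Nat.lt_succ_self n)
    have hpos := Tseq_pos hab hb (n + 1)
    rw [Tseq_add_two, sum_range_succ, sum_range_succ]
    nlinarith

end Tseq

section RuleWord

variable {a b : ℤ}

theorem ruleWord_nonneg (hab : -a + 1 ≤ b) (hb : b ≤ -2) (i : ℕ) : 0 ≤ ruleWord a b i := by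
  rcases i with _ | _ | i <;> simp only [ruleWord] <;> omega

theorem ruleWord_le {i : ℕ} (hi : 1 ≤ i) : ruleWord a b i ≤ a + b := by
  rcases i with _ | _ | i <;> simp only [ruleWord] <;> omega

theorem sum_range_ruleWord_mul_Tseq (j : ℕ) :
    ∑ i ∈ range (j + 1), ruleWord a b i * Tseq a b (j - i) = Tseq a b (j + 1) - 1 := by
  rcases j with _ | j
  · simp [ruleWord, Tseq]
  have htail : ∑ i ∈ range j, ruleWord a b (i + 1 + 1) * Tseq a b (j + 1 - (i + 1 + 1)) =
      (a + b) * ∑ i ∈ range j, Tseq a b i := by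
    rw [mul_sum, ← sum_range_reflect (fun i => (a + b) * Tseq a b i) j]
    refine sum_congr rfl fun i hi => ?_
    rw [show j + 1 - (i + 1 + 1) = j - 1 - i by omega]
    rfl
  rw [sum_range_succ', sum_range_succ', htail, Tseq_add_two]
  simp only [ruleWord, Nat.add_sub_cancel, Nat.sub_zero]
  ring

theorem sum_Ico_ruleWord_mul_Tseq_lt (hab : -a + 1 ≤ b) (hb : b ≤ -2) {j m : ℕ} (hm : m ≤ j) :
    ∑ i ∈ Ico (m + 1) (j + 1), ruleWord a b i * Tseq a b (j - i) < Tseq a b (j - m) :=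
  calc ∑ i ∈ Ico (m + 1) (j + 1), ruleWord a b i * Tseq a b (j - i)
      ≤ ∑ i ∈ Ico (m + 1) (j + 1), (a + b) * Tseq a b (j - i) :=
        sum_le_sum fun i hi => mul_le_mul_of_nonneg_right
          (ruleWord_le (by simp at hi; omega)) (Tseq_pos hab hb _).le
    _ = (a + b) * ∑ i ∈ range (j - m), Tseq a b i := by
        rw [← mul_sum, sum_Ico_eq_sum_range, ← sum_range_reflect (Tseq a b),
          show j + 1 - (m + 1) = j - m by omega]
        exact congrArg _ (sum_congr rfl fun i _ => by
          rw [show j - (m + 1 + i) = j - m - 1 - i by omega])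
    _ < Tseq a b (j - m) := mul_sum_range_Tseq_lt hab hb _

theorem sum_range_ruleWord_mul_Tseq_le (hab : -a + 1 ≤ b) (hb : b ≤ -2) {j m : ℕ} (hm : m ≤ j) :
    ∑ i ∈ range (m + 1), ruleWord a b i * Tseq a b (j - i) ≤ Tseq a b (j + 1) - 1 := by
  rw [← sum_range_ruleWord_mul_Tseq, ← sum_range_add_sum_Ico _ (by omega : m + 1 ≤ j + 1)]
  exact le_add_of_nonneg_right
    (sum_nonneg fun i _ => mul_nonneg (ruleWord_nonneg hab hb i) (Tseq_pos hab hb _).le)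

theorem Tseq_succ_le_sum_range_ruleWord_mul_Tseq (hab : -a + 1 ≤ b) (hb : b ≤ -2) {j m : ℕ}
    (hm : m ≤ j) :
    Tseq a b (j + 1) ≤ ∑ i ∈ range m, ruleWord a b i * Tseq a b (j - i) +
      (ruleWord a b m + 1) * Tseq a b (j - m) := by
  have htail := sum_Ico_ruleWord_mul_Tseq_lt hab hb hm
  have hsplit := sum_range_add_sum_Ico (fun i => ruleWord a b i * Tseq a b (j - i))
    (by omega : m + 1 ≤ j + 1)
  rw [sum_range_ruleWord_mul_Tseq, sum_range_succ] at hsplit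
  linarith

theorem WordLe.or_exists_gt (d : ℕ → ℕ) (j : ℕ) (k : ℕ) :
    WordLe a b d j k ∨
      ∃ m ≤ k, (∀ i < m, (d (j - i) : ℤ) = ruleWord a b i) ∧ ruleWord a b m < d (j - m) := by
  induction k with
  | zero =>
    rcases lt_trichotomy (d j : ℤ) (ruleWord a b 0) with h | h | h
    · exact Or.inl (Or.inr ⟨0, le_rfl, by simp, by simpa using h⟩)
    · exact Or.inl (Or.inl fun i hi => by obtain rfl := Nat.le_zero.1 hi; simpa using h)
    · exact Or.inr ⟨0, le_rfl, by simp, by simpa using h⟩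
  | succ k ih =>
    rcases ih with (hall | ⟨m, hmk, hpre, hlt⟩) | ⟨m, hmk, hpre, hgt⟩
    · rcases lt_trichotomy (d (j - (k + 1)) : ℤ) (ruleWord a b (k + 1)) with h | h | h
      · exact Or.inl (Or.inr ⟨k + 1, le_rfl, fun i hi => hall i (by omega), h⟩)
      · refine Or.inl (Or.inl fun i hi => ?_)
        rcases Nat.le_succ_iff.1 hi with hi | rfl
        exacts [hall i hi, h]
      · exact Or.inr ⟨k + 1, le_rfl, fun i hi => hall i (by omega), h⟩
    · exact Or.inl (Or.inr ⟨m, by omega, hpre, hlt⟩)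
    · exact Or.inr ⟨m, by omega, hpre, hgt⟩

theorem AdmissibleWord.digit_le {d : ℕ → ℕ} (hd : AdmissibleWord a b d) (j : ℕ) :
    (d j : ℤ) ≤ a - 1 := by
  rcases hd j 0 (Nat.zero_le j) with h | ⟨m, hm, -, hlt⟩
  · simpa [ruleWord] using (h 0 le_rfl).le
  · obtain rfl := Nat.le_zero.1 hm
    simpa [ruleWord] using hlt.le

theorem AdmissibleWord.isGreedy (hab : -a + 1 ≤ b) (hb : b ≤ -2) {d : ℕ → ℕ}
    (hd : AdmissibleWord a b d) : IsGreedy (Tseq a b) d := by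
  refine fun n => Nat.strong_induction_on n fun n ih => ?_
  rcases n with _ | j
  · exact Tseq_pos hab hb 0
  rcases hd j j le_rfl with hall | ⟨m, hmj, hpre, hlt⟩
  · rw [digitValue_of_prefix _ (j + 1) le_rfl fun i hi => hall i (by omega),
      sum_range_ruleWord_mul_Tseq, Nat.sub_self, digitValue_zero]
    omega
  · have hlow := ih (j - m) (by omega)
    have hprefix := sum_range_ruleWord_mul_Tseq_le hab hb hmj
    have hdigit : (d (j - m) : ℤ) * Tseq a b (j - m) ≤ (ruleWord a b m - 1) * Tseq a b (j - m) :=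
      mul_le_mul_of_nonneg_right (by omega) (Tseq_pos hab hb _).le
    rw [digitValue_of_prefix _ m (by omega) hpre, show j + 1 - m = j - m + 1 by omega,
      digitValue_succ]
    rw [sum_range_succ] at hprefix
    linarith

theorem IsGreedy.admissibleWord (hab : -a + 1 ≤ b) (hb : b ≤ -2) {d : ℕ → ℕ}
    (hd : IsGreedy (Tseq a b) d) : AdmissibleWord a b d := by
  intro j k hkj
  refine (WordLe.or_exists_gt d j k).resolve_right ?_
  rintro ⟨m, hmk, hpre, hgt⟩
  have hsplit := digitValue_of_prefix (u := Tseq a b) _ m (by omega) hpre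
  rw [show j + 1 - m = j - m + 1 by omega, digitValue_succ (j - m)] at hsplit
  have hdigit : (ruleWord a b m + 1) * Tseq a b (j - m) ≤ (d (j - m) : ℤ) * Tseq a b (j - m) :=
    mul_le_mul_of_nonneg_right (by omega) (Tseq_pos hab hb _).le
  have hlow := digitValue_nonneg (d := d) (fun i => (Tseq_pos hab hb i).le) (j - m)
  have := Tseq_succ_le_sum_range_ruleWord_mul_Tseq hab hb (hmk.trans hkj)
  linarith [hd (j + 1)]

end RuleWord

/-- Every nonnegative integer has a unique admissible representation
`N = Σ d_i T_i` with digits in `{0, …, a−1}`. -/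
theorem unique_admissible_representation (a b : ℤ) (hab : -a + 1 ≤ b) (hb : b ≤ -2)
    (N : ℕ) :
    ∃! d : ℕ → ℕ, IsAdmissible a b d ∧ (∀ i, (d i : ℤ) ≤ a - 1) ∧
      (N : ℤ) = ∑ᶠ i : ℕ, (d i : ℤ) * Tseq a b i := by
  obtain ⟨d, hd0, hd, hdN⟩ := exists_isGreedy (u := Tseq a b) rfl
    (Tseq_strictMono hab hb).monotone N N N.cast_nonneg (natCast_lt_Tseq hab hb N)
  have hdf : (Function.support d).Finite :=
    (Set.finite_Iio N).subset fun i hi => not_le.1 fun h => hi (hd0 i h)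
  have hdsum : (N : ℤ) = ∑ᶠ i, (d i : ℤ) * Tseq a b i := by rw [finsum_eq_digitValue hd0, hdN]
  have hdadm := hd.admissibleWord hab hb
  refine ⟨d, ⟨⟨hdf, hdadm⟩, hdadm.digit_le, hdsum⟩, ?_⟩
  rintro e ⟨⟨hef, headm⟩, -, heN⟩
  exact (headm.isGreedy hab hb).eq_of_finsum_eq (Tseq_pos hab hb) hd hef hdf (heN.symm.trans hdsum)
end

section
/- The sequence (T_n)_{n≥0} is a strictly increasing sequence of positive integers: for all n ≥ 0, 0 < T_n < T_{n+1}. -/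
open scoped BigOperators

namespace Tseq

variable {a b : ℤ}

theorem add_three (a b : ℤ) (n : ℕ) :
    Tseq a b (n + 3) = a * Tseq a b (n + 2) + b * Tseq a b (n + 1) + Tseq a b n :=
  rfl

/-- The increment is a combination of the previous increment and terms, with coefficients
`a - 1`, `a + b - 1` and `1`; so increase propagates as soon as these are nonnegative. -/
theorem add_three_sub_add_two (a b : ℤ) (n : ℕ) :
    Tseq a b (n + 3) - Tseq a b (n + 2) =
      (a - 1) * (Tseq a b (n + 2) - Tseq a b (n + 1)) + (a + b - 1) * Tseq a b (n + 1) +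
        Tseq a b n := by
  rw [add_three]
  ring

theorem add_two_lt_add_three (ha : 1 ≤ a) (hab : 1 ≤ a + b) {n : ℕ} (h₀ : 0 < Tseq a b n)
    (h₁ : 0 ≤ Tseq a b (n + 1)) (h₁₂ : Tseq a b (n + 1) ≤ Tseq a b (n + 2)) :
    Tseq a b (n + 2) < Tseq a b (n + 3) := by
  have key := add_three_sub_add_two a b n
  have hinc : 0 ≤ (a - 1) * (Tseq a b (n + 2) - Tseq a b (n + 1)) :=
    mul_nonneg (by linarith) (by linarith)
  have hmid : 0 ≤ (a + b - 1) * Tseq a b (n + 1) := mul_nonneg (by linarith) h₁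
  linarith

theorem pos_lt_lt (ha : 2 ≤ a) (hab : 1 ≤ a + b) :
    ∀ n : ℕ, 0 < Tseq a b n ∧ Tseq a b n < Tseq a b (n + 1) ∧
      Tseq a b (n + 1) < Tseq a b (n + 2)
  | 0 => by
    simp only [Tseq]
    refine ⟨one_pos, by linarith, ?_⟩
    nlinarith [mul_le_mul_of_nonneg_left ha (show 0 ≤ a - 1 by linarith)]
  | n + 1 => by
    obtain ⟨h₀, h₀₁, h₁₂⟩ := pos_lt_lt ha hab n
    exact ⟨h₀.trans h₀₁, h₁₂,
      add_two_lt_add_three (by linarith) hab h₀ (h₀.trans h₀₁).le h₁₂.le⟩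

end Tseq

/-- `(T n)` is a strictly increasing sequence of positive integers. -/
theorem Tseq_pos_strictMono (a b : ℤ) (hab : -a + 1 ≤ b) (hb : b ≤ -2) (n : ℕ) :
    0 < Tseq a b n ∧ Tseq a b n < Tseq a b (n + 1) :=
  let ⟨hpos, hlt, _⟩ := Tseq.pos_lt_lt (by linarith) (by linarith) n
  ⟨hpos, hlt⟩
end

section
/- For all n ≥ 2, the matrix B maps the column vector (T_n/β − T_{n−1}, T_n/β² − T_{n−2}) to the column vector (T_{n+1}/β − T_n, T_{n+1}/β² − T_{n−1}). -/
open scoped BigOperators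

-- After clearing denominators each coordinate is `x` times the root equation of `β`.
theorem Bmat_mulVec_of_root {a : ℝ} {b : ℤ} {β : ℝ} (hβroot : β ^ 3 = a * β ^ 2 + b * β + 1)
    (x y z : ℝ) :
    (Bmat b β).mulVec ![x / β - y, x / β ^ 2 - z] =
      ![(a * x + b * y + z) / β - x, (a * x + b * y + z) / β ^ 2 - y] := by
  have hβ0 : β ≠ 0 := by
    rintro rfl
    norm_num at hβroot
  ext i
  fin_cases i <;>
    simp only [Matrix.mulVec, dotProduct, Bmat, Fin.zero_eta, Fin.mk_one, Fin.isValue,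
      Matrix.of_apply, Matrix.cons_val', Matrix.cons_val_fin_one, Matrix.cons_val_zero,
      Matrix.cons_val_one, Fin.sum_univ_two] <;>
    field_simp <;>
    linear_combination x * hβroot

theorem Bmat_mulVec_delta_general (a b : ℤ)
    (β : ℝ) (hβroot : β ^ 3 = a * β ^ 2 + b * β + 1)
    (n : ℕ) (hn : 2 ≤ n) :
    (Bmat b β).mulVec
      ![(Tseq a b n : ℝ) / β - (Tseq a b (n - 1) : ℝ),
        (Tseq a b n : ℝ) / β ^ 2 - (Tseq a b (n - 2) : ℝ)] =
    ![(Tseq a b (n + 1) : ℝ) / β - (Tseq a b n : ℝ),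
      (Tseq a b (n + 1) : ℝ) / β ^ 2 - (Tseq a b (n - 1) : ℝ)] := by
  obtain ⟨m, rfl⟩ := Nat.exists_eq_add_of_le' hn
  rw [show m + 2 - 1 = m + 1 from rfl, Nat.add_sub_cancel, Bmat_mulVec_of_root hβroot,
    Tseq_add_three]
  push_cast
  rfl

/-- For `n ≥ 2`, `B` maps `(T n/β − T(n−1), T n/β² − T(n−2))` to
`(T(n+1)/β − T n, T(n+1)/β² − T(n−1))`. -/
theorem Bmat_mulVec_delta (a b : ℤ) (hab : -a + 1 ≤ b) (hb : b ≤ -2)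
    (β : ℝ) (hβ : 1 < β) (hβroot : β ^ 3 = a * β ^ 2 + b * β + 1)
    (n : ℕ) (hn : 2 ≤ n) :
    (Bmat b β).mulVec
      ![(Tseq a b n : ℝ) / β - (Tseq a b (n - 1) : ℝ),
        (Tseq a b n : ℝ) / β ^ 2 - (Tseq a b (n - 2) : ℝ)] =
    ![(Tseq a b (n + 1) : ℝ) / β - (Tseq a b n : ℝ),
      (Tseq a b (n + 1) : ℝ) / β ^ 2 - (Tseq a b (n - 1) : ℝ)] :=
  Bmat_mulVec_delta_general a b β hβroot n hn
end

section
/- If N is a positive integer with admissible T-representation N = Σ_{j=0}^{k} d_j T_j, then δ(N) = Σ_{j=0}^{k} d_j B^j δ(1), where δ(1) = (1/β, 1/β²). -/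
open scoped BigOperators

/-! With `T_{-1} = T_{-2} = 0`, the vectors `v j = T_j • (1/β, 1/β²) - (T_{j-1}, T_{j-2})` satisfy
`v (j+1) = B v j`: this is the recurrence for `T` combined with `1/β³ = 1 - a/β - b/β²`. Hence
`B^j δ(1) = v j`, and summing `d_j v j` gives `δ(N)` once the sums `Σ d_{j+1} T_j` and
`Σ d_{j+2} T_j` in its definition are reindexed. -/

open Function

theorem finsum_comp_add_right_of_eq_zero {M : Type*} [AddCommMonoid M] {f : ℕ → M} {k : ℕ}
    (hf : ∀ j < k, f j = 0) : ∑ᶠ j, f (j + k) = ∑ᶠ j, f j := by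
  rw [← finsum_mem_range (f := f) (add_left_injective k), ← finsum_mem_univ f]
  refine finsum_mem_inter_support_eq f _ _ (Set.ext fun i => ?_)
  simp only [Set.mem_inter_iff, Set.mem_range, mem_support, Set.mem_univ, true_and,
    and_iff_right_iff_imp]
  intro hi
  exact ⟨i - k, Nat.sub_add_cancel (not_lt.1 fun h => hi (hf i h))⟩

/-- `shiftedTseq a b n = T_{n-2}`, with the values `T_{-1} = T_{-2} = 0` forced by running the
recurrence backwards. -/
def shiftedTseq (a b : ℤ) : ℕ → ℤ
  | 0 => 0
  | 1 => 0
  | n + 2 => Tseq a b n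

theorem shiftedTseq_add_three (a b : ℤ) (n : ℕ) :
    shiftedTseq a b (n + 3) =
      a * shiftedTseq a b (n + 2) + b * shiftedTseq a b (n + 1) + shiftedTseq a b n := by
  match n with
  | 0 => simp [shiftedTseq, Tseq]
  | 1 => simp [shiftedTseq, Tseq]; ring
  | n + 2 => rfl

theorem Bmat_pow_mulVec {a b : ℤ} {β : ℝ} (hβ : β ^ 3 = a * β ^ 2 + b * β + 1) (j : ℕ) :
    (Bmat b β ^ j).mulVec ![1 / β, 1 / β ^ 2] =
      ![(shiftedTseq a b (j + 2) : ℝ) / β - shiftedTseq a b (j + 1),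
        (shiftedTseq a b (j + 2) : ℝ) / β ^ 2 - shiftedTseq a b j] := by
  have hβ0 : β ≠ 0 := by rintro rfl; norm_num at hβ
  induction j with
  | zero => ext i; fin_cases i <;> simp [shiftedTseq, Tseq]
  | succ j ih =>
    have hrec := congrArg (Int.cast : ℤ → ℝ) (shiftedTseq_add_three a b j)
    push_cast at hrec
    rw [pow_succ', ← Matrix.mulVec_mulVec, ih]
    ext i
    fin_cases i <;>
      simp only [Bmat, Matrix.mulVec, dotProduct, Fin.sum_univ_two, Matrix.of_apply,
        Matrix.cons_val', Matrix.cons_val_fin_one, Matrix.cons_val_zero, Matrix.cons_val_one,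
        Fin.isValue, Fin.zero_eta, Fin.mk_one, hrec] <;>
      field_simp <;>
      linear_combination (shiftedTseq a b (j + 2) : ℝ) * hβ

theorem finsum_mul_div_sub {α K : Type*} [Field K] {c : α → K} (hc : HasFiniteSupport c)
    (u v : α → K) (x : K) :
    ∑ᶠ j, c j * (u j / x - v j) = (∑ᶠ j, c j * u j) / x - ∑ᶠ j, c j * v j := by
  simp only [mul_sub, div_eq_mul_inv _ x, ← mul_assoc, finsum_mul]
  exact finsum_sub_distrib ((hc.fun_mul_left u).fun_mul_left _) (hc.fun_mul_left v)

theorem deltaVec_eq_finsum {a b : ℤ} {β : ℝ} {N : ℕ} {d : ℕ → ℕ} (hd : (support d).Finite)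
    (hrep : (N : ℤ) = ∑ᶠ i, (d i : ℤ) * Tseq a b i) :
    deltaVec a b β N d = ∑ᶠ j, (d j : ℝ) •
      ![(shiftedTseq a b (j + 2) : ℝ) / β - shiftedTseq a b (j + 1),
        (shiftedTseq a b (j + 2) : ℝ) / β ^ 2 - shiftedTseq a b j] := by
  set s : ℕ → ℝ := fun n => shiftedTseq a b n
  have hc : HasFiniteSupport fun j => (d j : ℝ) := HasFiniteSupport.comp hd Nat.cast_zero
  have hN : (N : ℝ) = ∑ᶠ j, (d j : ℝ) * s (j + 2) := by
    have := congrArg (Int.castAddHom ℝ) hrep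
    rw [(Int.castAddHom ℝ).map_finsum_of_injective Int.cast_injective] at this
    simpa [s, shiftedTseq] using this
  have h1 : ∑ᶠ j, (d (j + 1) : ℝ) * Tseq a b j = ∑ᶠ j, (d j : ℝ) * s (j + 1) :=
    finsum_comp_add_right_of_eq_zero (f := fun j => (d j : ℝ) * s (j + 1)) (k := 1)
      (by simp [s, shiftedTseq])
  have h2 : ∑ᶠ j, (d (j + 2) : ℝ) * Tseq a b j = ∑ᶠ j, (d j : ℝ) * s j :=
    finsum_comp_add_right_of_eq_zero (f := fun j => (d j : ℝ) * s j) (k := 2)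
      (by intro j hj; interval_cases j <;> simp [s, shiftedTseq])
  ext i
  rw [finsum_apply (hc.fun_smul_left _)]
  fin_cases i
  · simp [deltaVec, h1, hN, finsum_mul_div_sub hc, s]
  · simp [deltaVec, h2, hN, finsum_mul_div_sub hc, s]

theorem deltaVec_eq_sum_pow_general (a b : ℤ)
    (β : ℝ) (hβroot : β ^ 3 = a * β ^ 2 + b * β + 1)
    (N : ℕ) (d : ℕ → ℕ) (hd : IsAdmissible a b d)
    (hrep : (N : ℤ) = ∑ᶠ i : ℕ, (d i : ℤ) * Tseq a b i) :
    deltaVec a b β N d =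
      ∑ᶠ j : ℕ, (d j : ℝ) • (Bmat b β ^ j).mulVec ![1 / β, 1 / β ^ 2] := by
  simp only [Bmat_pow_mulVec hβroot]
  exact deltaVec_eq_finsum hd.1 hrep

/-- If `N = Σ_j d_j T_j` is an admissible representation then
`δ(N) = Σ_j d_j B^j δ(1)` with `δ(1) = (1/β, 1/β²)`. -/
theorem deltaVec_eq_sum_pow (a b : ℤ) (hab : -a + 1 ≤ b) (hb : b ≤ -2)
    (β : ℝ) (hβ : 1 < β) (hβroot : β ^ 3 = a * β ^ 2 + b * β + 1)
    (N : ℕ) (hN : 0 < N) (d : ℕ → ℕ) (hd : IsAdmissible a b d)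
    (hrep : (N : ℤ) = ∑ᶠ i : ℕ, (d i : ℤ) * Tseq a b i) :
    deltaVec a b β N d =
      ∑ᶠ j : ℕ, (d j : ℝ) • (Bmat b β ^ j).mulVec ![1 / β, 1 / β ^ 2] :=
  deltaVec_eq_sum_pow_general a b β hβroot N d hd hrep
end

section
/- With M the complex 2×2 matrix with first row (ᾱ + b/β, 1/β) and second row (−α − b/β, −1/β), one has M·B = D·M, where D is the diagonal complex 2×2 matrix with diagonal entries α and ᾱ, and B is viewed as a complex matrix. -/
open scoped BigOperators

/-! Each row of `M` is a left eigenvector of `B`: for the other two roots `γ, δ` of `P`,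
the row `(δ + b/β, 1/β)` satisfies `(δ + b/β, 1/β) B = γ (δ + b/β, 1/β)`, an identity that
only needs Vieta's relations `γ + δ = a - β` and `γ δ β = 1`; these hold because `α` is not
real, so `β, α, ᾱ` are three distinct roots of `P`. -/

theorem sum_and_prod_of_three_roots_of_cubic {R : Type*} [CommRing R] [IsDomain R]
    {a b c r s t : R} (hrs : r ≠ s) (hrt : r ≠ t) (hst : s ≠ t)
    (hr : r ^ 3 = a * r ^ 2 + b * r + c) (hs : s ^ 3 = a * s ^ 2 + b * s + c)
    (ht : t ^ 3 = a * t ^ 2 + b * t + c) :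
    r + s + t = a ∧ r * s * t = c := by
  have hrs' : r ^ 2 + r * s + s ^ 2 - a * (r + s) - b = 0 := by
    refine (mul_eq_zero.mp ?_).resolve_left (sub_ne_zero.mpr hrs)
    linear_combination hr - hs
  have hrt' : r ^ 2 + r * t + t ^ 2 - a * (r + t) - b = 0 := by
    refine (mul_eq_zero.mp ?_).resolve_left (sub_ne_zero.mpr hrt)
    linear_combination hr - ht
  have hsum : r + s + t - a = 0 := by
    refine (mul_eq_zero.mp ?_).resolve_left (sub_ne_zero.mpr hst)
    linear_combination hrs' - hrt'
  exact ⟨by linear_combination hsum, by linear_combination hr + r * s * hsum - r * hrs'⟩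

section

open Matrix

theorem vecMul_Bmat_eq_smul {K : Type*} [Field K] {a b β γ δ : K} (hβ : β ≠ 0)
    (hsum : γ + δ = a - β) (hprod : γ * δ * β = 1) (hβroot : β ^ 3 = a * β ^ 2 + b * β + 1) :
    ![δ + b / β, 1 / β] ᵥ* !![-b / β, -1 / β; 1 - b / β ^ 2, -1 / β ^ 2] =
      γ • ![δ + b / β, 1 / β] := by
  refine funext (Fin.forall_fin_two.mpr ⟨?_, ?_⟩) <;>
    simp only [vecMul, vec2_dotProduct, of_apply, cons_val_zero, cons_val_one, Pi.smul_apply,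
      smul_eq_mul] <;>
    field_simp
  · linear_combination -β ^ 2 * hprod - b * β ^ 2 * hsum + b * hβroot
  · linear_combination -β ^ 2 * hsum + hβroot

theorem Matrix.mul_eq_diagonal_mul_of_vecMul_eq_smul {m n R : Type*} [Fintype m] [Fintype n]
    [DecidableEq m] [Semiring R] {M : Matrix m n R} {B : Matrix n n R} {d : m → R}
    (h : ∀ i, M i ᵥ* B = d i • M i) : M * B = diagonal d * M := by
  ext i j
  rw [diagonal_mul, mul_apply_eq_vecMul, h i, Pi.smul_apply, smul_eq_mul]

end

theorem Mmat_mul_Bmat_general (a b : ℤ)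
    (β : ℝ) (hβroot : β ^ 3 = a * β ^ 2 + b * β + 1)
    (α : ℂ) (hαim : α.im ≠ 0) (hαroot : α ^ 3 = a * α ^ 2 + b * α + 1) :
    let M : Matrix (Fin 2) (Fin 2) ℂ :=
      !![starRingEnd ℂ α + (b : ℂ) / (β : ℂ), 1 / (β : ℂ);
         -α - (b : ℂ) / (β : ℂ), -1 / (β : ℂ)]
    let Bc : Matrix (Fin 2) (Fin 2) ℂ :=
      !![-(b : ℂ) / (β : ℂ), -1 / (β : ℂ);
         1 - (b : ℂ) / (β : ℂ) ^ 2, -1 / (β : ℂ) ^ 2]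
    let D : Matrix (Fin 2) (Fin 2) ℂ := !![α, 0; 0, starRingEnd ℂ α]
    M * Bc = D * M := by
  intro M Bc D
  have hβroot' : (β : ℂ) ^ 3 = a * (β : ℂ) ^ 2 + b * β + 1 := by exact_mod_cast hβroot
  have hαroot' : starRingEnd ℂ α ^ 3 = a * starRingEnd ℂ α ^ 2 + b * starRingEnd ℂ α + 1 := by
    simpa using congrArg (starRingEnd ℂ) hαroot
  have hβα : (β : ℂ) ≠ α := fun h => hαim (by simp [← h])
  have hβα' : (β : ℂ) ≠ starRingEnd ℂ α := fun h => hαim (by simpa using congrArg Complex.im h)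
  have hαα' : α ≠ starRingEnd ℂ α := fun h => hαim (Complex.conj_eq_iff_im.mp h.symm)
  obtain ⟨hsum, hprod⟩ :=
    sum_and_prod_of_three_roots_of_cubic hβα hβα' hαα' hβroot' hαroot hαroot'
  have hβ0 : (β : ℂ) ≠ 0 :=
    left_ne_zero_of_mul_eq_one (b := α * starRingEnd ℂ α) (by linear_combination hprod)
  have hM1 : M 1 = -![α + b / β, 1 / β] := by
    refine funext (Fin.forall_fin_two.mpr ⟨?_, ?_⟩) <;>
      simp only [M, Matrix.of_apply, Matrix.cons_val_zero, Matrix.cons_val_one, Pi.neg_apply] <;>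
      ring
  rw [show D = Matrix.diagonal ![α, starRingEnd ℂ α] from (Matrix.diagonal_vec2 _ _).symm]
  refine Matrix.mul_eq_diagonal_mul_of_vecMul_eq_smul (R := ℂ) (Fin.forall_fin_two.mpr ⟨?_, ?_⟩)
  · exact vecMul_Bmat_eq_smul (γ := α) (δ := starRingEnd ℂ α) hβ0
      (by linear_combination hsum) (by linear_combination hprod) hβroot'
  · rw [hM1, Matrix.neg_vecMul, smul_neg]
    exact congrArg Neg.neg <| vecMul_Bmat_eq_smul (γ := starRingEnd ℂ α) (δ := α) hβ0
      (by linear_combination hsum) (by linear_combination hprod) hβroot'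

/-- `M·B = D·M` where `M = [[ᾱ + b/β, 1/β], [−α − b/β, −1/β]]` and `D = diag(α, ᾱ)`. -/
theorem Mmat_mul_Bmat (a b : ℤ) (hab : -a + 1 ≤ b) (hb : b ≤ -2)
    (β : ℝ) (hβ : 1 < β) (hβroot : β ^ 3 = a * β ^ 2 + b * β + 1)
    (α : ℂ) (hαim : α.im ≠ 0) (hαroot : α ^ 3 = a * α ^ 2 + b * α + 1)
    (hαabs : ‖α‖ < 1) :
    let M : Matrix (Fin 2) (Fin 2) ℂ :=
      !![starRingEnd ℂ α + (b : ℂ) / (β : ℂ), 1 / (β : ℂ);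
         -α - (b : ℂ) / (β : ℂ), -1 / (β : ℂ)]
    let Bc : Matrix (Fin 2) (Fin 2) ℂ :=
      !![-(b : ℂ) / (β : ℂ), -1 / (β : ℂ);
         1 - (b : ℂ) / (β : ℂ) ^ 2, -1 / (β : ℂ) ^ 2]
    let D : Matrix (Fin 2) (Fin 2) ℂ := !![α, 0; 0, starRingEnd ℂ α]
    M * Bc = D * M :=
  Mmat_mul_Bmat_general a b β hβroot α hαim hαroot
end

section
/- For all n ≥ 0, 𝒩(δ(T_n)) = 𝒩(δ(1)) · |α|^n, where δ(T_n) = T_n·(1/β, 1/β²) − (T_{n−1}, T_{n−2}) for n ≥ 2 (with δ(T_0) = (1/β, 1/β²) and δ(T_1) = T_1·(1/β, 1/β²) − (1, 0)). -/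
open scoped BigOperators

/-- `δ(T n)`: `δ(T 0) = (1/β, 1/β²)`, `δ(T 1) = T 1·(1/β, 1/β²) − (1, 0)`, and for `n ≥ 2`,
`δ(T n) = T n·(1/β, 1/β²) − (T (n−1), T (n−2))`. -/
noncomputable def deltaT (a b : ℤ) (β : ℝ) : ℕ → (Fin 2 → ℝ)
  | 0 => ![1 / β, 1 / β ^ 2]
  | 1 => ![(Tseq a b 1 : ℝ) / β - 1, (Tseq a b 1 : ℝ) / β ^ 2]
  | n + 2 => ![(Tseq a b (n + 2) : ℝ) / β - (Tseq a b (n + 1) : ℝ),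
               (Tseq a b (n + 2) : ℝ) / β ^ 2 - (Tseq a b n : ℝ)]

/-!
The Rauzy norm is the modulus of the complex linear form `ℓ x = (α + b/β) x₁ + x₂/β`.
Extending `T` by `T₋₂ = T₋₁ = 0`, `ℓ (δ(T n))` is a fixed linear form in the state vector
`(T (n-2), T (n-1), T n)` of the recurrence. Vieta's relations `β + α + ᾱ = a` and `βαᾱ = 1` show
that this form is a left eigenvector of the companion matrix for the eigenvalue `ᾱ`, so
`ℓ (δ(T n)) = ᾱⁿ ℓ (δ(1))`; taking moduli gives the claim since `|ᾱ| = |α|`.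
-/

open ComplexConjugate

theorem cubic_roots_sum_and_prod {K : Type*} [Field K] {a b c x y z : K}
    (hxy : x ≠ y) (hxz : x ≠ z) (hyz : y ≠ z) (hx : x ^ 3 = a * x ^ 2 + b * x + c)
    (hy : y ^ 3 = a * y ^ 2 + b * y + c) (hz : z ^ 3 = a * z ^ 2 + b * z + c) :
    x + y + z = a ∧ x * y * z = c := by
  have hxy' : x ^ 2 + x * y + y ^ 2 - a * (x + y) - b = 0 :=
    (mul_eq_zero.mp (by linear_combination hx - hy :
      (x - y) * (x ^ 2 + x * y + y ^ 2 - a * (x + y) - b) = 0)).resolve_left (sub_ne_zero.mpr hxy)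
  have hxz' : x ^ 2 + x * z + z ^ 2 - a * (x + z) - b = 0 :=
    (mul_eq_zero.mp (by linear_combination hx - hz :
      (x - z) * (x ^ 2 + x * z + z ^ 2 - a * (x + z) - b) = 0)).resolve_left (sub_ne_zero.mpr hxz)
  have hsum : x + y + z = a := by
    have := (mul_eq_zero.mp (by linear_combination hxy' - hxz' :
      (y - z) * (x + y + z - a) = 0)).resolve_left (sub_ne_zero.mpr hyz)
    linear_combination this
  refine ⟨hsum, ?_⟩
  linear_combination hx + x * y * hsum - x * hxy'

/-- If `(c₀, c₁, c₂)` is a left eigenvector, for the eigenvalue `μ`, of the companion matrix of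
the recurrence, then `c₀ u n + c₁ u (n+1) + c₂ u (n+2)` is geometric with ratio `μ`. -/
theorem linComb_of_recurrence_eq_pow_mul {R : Type*} [CommRing R] {a b c c₀ c₁ c₂ μ : R}
    {u : ℕ → R} (hu : ∀ n, u (n + 3) = a * u (n + 2) + b * u (n + 1) + c * u n)
    (h₀ : c * c₂ = μ * c₀) (h₁ : c₀ + b * c₂ = μ * c₁) (h₂ : c₁ + a * c₂ = μ * c₂) (n : ℕ) :
    c₀ * u n + c₁ * u (n + 1) + c₂ * u (n + 2) = μ ^ n * (c₀ * u 0 + c₁ * u 1 + c₂ * u 2) := by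
  induction n with
  | zero => ring
  | succ n ih =>
    rw [hu, pow_succ, mul_comm _ μ, mul_assoc, ← ih]
    linear_combination u n * h₀ + u (n + 1) * h₁ + u (n + 2) * h₂

/-- `Tseq` shifted by two places, i.e. extended by `T (-2) = T (-1) = 0`; this gives
`deltaT n` the same shape for `n = 0, 1` as for `n ≥ 2`. -/
def paddedTseq (a b : ℤ) : ℕ → ℤ
  | 0 => 0
  | 1 => 0
  | 2 => 1
  | n + 3 => a * paddedTseq a b (n + 2) + b * paddedTseq a b (n + 1) + paddedTseq a b n

theorem paddedTseq_add_two (a b : ℤ) (n : ℕ) : paddedTseq a b (n + 2) = Tseq a b n := by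
  induction n using Nat.strong_induction_on with
  | _ n ih =>
    match n, ih with
    | 0, _ => rfl
    | 1, _ => simp [paddedTseq, Tseq]
    | 2, _ => simp [paddedTseq, Tseq, sq]
    | n + 3, ih =>
      rw [paddedTseq, Tseq, ih (n + 2) (by omega), ih (n + 1) (by omega), ih n (by omega)]

theorem deltaT_eq (a b : ℤ) (β : ℝ) (n : ℕ) :
    deltaT a b β n = ![(paddedTseq a b (n + 2) : ℝ) / β - paddedTseq a b (n + 1),
      (paddedTseq a b (n + 2) : ℝ) / β ^ 2 - paddedTseq a b n] := by
  match n with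
  | 0 => simp [deltaT, paddedTseq]
  | 1 => simp [deltaT, paddedTseq, Tseq]
  | n + 2 => simp only [deltaT, paddedTseq_add_two]

noncomputable def rauzyForm (b : ℤ) (β : ℝ) (α : ℂ) (x : Fin 2 → ℝ) : ℂ :=
  (α + (b : ℂ) / (β : ℂ)) * (x 0 : ℂ) + (x 1 : ℂ) / (β : ℂ)

theorem rnorm_eq_norm_rauzyForm (b : ℤ) (β : ℝ) (α : ℂ) (x : Fin 2 → ℝ) :
    rnorm b β α x = ‖rauzyForm b β α x‖ := rfl

theorem rauzyForm_deltaT_eq (a b : ℤ) (β : ℝ) (α : ℂ) (n : ℕ) :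
    rauzyForm b β α (deltaT a b β n) = -1 / β * (paddedTseq a b n : ℂ)
      + -(α + b / β) * (paddedTseq a b (n + 1) : ℂ)
      + ((α + b / β) / β + 1 / (β : ℂ) ^ 3) * (paddedTseq a b (n + 2) : ℂ) := by
  rw [deltaT_eq]
  simp only [rauzyForm, Matrix.cons_val_zero, Matrix.cons_val_one, Matrix.cons_val_fin_one]
  push_cast
  ring

theorem rauzyForm_deltaT {a b : ℤ} {β : ℝ} {α γ : ℂ} (hβ : β ≠ 0) (hsum : β + α + γ = a)
    (hprod : β * α * γ = 1) (hβroot : (β : ℂ) ^ 3 = a * (β : ℂ) ^ 2 + b * β + 1)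
    (hγroot : γ ^ 3 = a * γ ^ 2 + b * γ + 1) (n : ℕ) :
    rauzyForm b β α (deltaT a b β n) = γ ^ n * rauzyForm b β α (deltaT a b β 0) := by
  have hB : (β : ℂ) ≠ 0 := Complex.ofReal_ne_zero.mpr hβ
  have h₀ : 1 * ((α + b / β) / β + 1 / (β : ℂ) ^ 3) = γ * (-1 / β) := by
    field_simp
    linear_combination (β : ℂ) ^ 2 * hsum - hβroot
  have h₁ : -1 / (β : ℂ) + b * ((α + b / β) / β + 1 / (β : ℂ) ^ 3) = γ * -(α + b / β) := by
    linear_combination (norm := (field_simp; ring)) b * h₀ + hprod / β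
  have h₂ : -(α + b / β) + a * ((α + b / β) / β + 1 / (β : ℂ) ^ 3) =
      γ * ((α + b / β) / β + 1 / (β : ℂ) ^ 3) := by
    linear_combination (norm := (field_simp; ring))
      (a - γ) * h₀ + α * hγroot - (γ ^ 2 - a * γ - b) / β * hprod
  have key := linComb_of_recurrence_eq_pow_mul (u := fun n => (paddedTseq a b n : ℂ))
    (fun n => by push_cast [paddedTseq]; ring) h₀ h₁ h₂ n
  rw [rauzyForm_deltaT_eq, rauzyForm_deltaT_eq, key]

theorem rnorm_deltaT_general (a b : ℤ)
    (β : ℝ) (hβ : 1 < β) (hβroot : β ^ 3 = a * β ^ 2 + b * β + 1)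
    (α : ℂ) (hαim : α.im ≠ 0) (hαroot : α ^ 3 = a * α ^ 2 + b * α + 1)
    (n : ℕ) :
    rnorm b β α (deltaT a b β n) =
      rnorm b β α ![1 / β, 1 / β ^ 2] * ‖α‖ ^ n := by
  have hβα : (β : ℂ) ≠ α := fun h => hαim (by simp [← h])
  have hβα' : (β : ℂ) ≠ conj α := fun h => hαim (by simpa using congrArg Complex.im h.symm)
  have hαα' : α ≠ conj α := fun h => hαim (Complex.conj_eq_iff_im.mp h.symm)
  have hβroot' : (β : ℂ) ^ 3 = a * (β : ℂ) ^ 2 + b * β + 1 := by exact_mod_cast hβroot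
  have hα'root : conj α ^ 3 = a * conj α ^ 2 + b * conj α + 1 := by
    simpa using congrArg conj hαroot
  obtain ⟨hsum, hprod⟩ := cubic_roots_sum_and_prod hβα hβα' hαα' hβroot' hαroot hα'root
  rw [rnorm_eq_norm_rauzyForm, rnorm_eq_norm_rauzyForm, ← deltaT.eq_1 a b β,
    rauzyForm_deltaT (by positivity) hsum hprod hβroot' hα'root, norm_mul, norm_pow,
    Complex.norm_conj, mul_comm]

/-- For all `n ≥ 0`, `𝒩(δ(T n)) = 𝒩(δ(1)) |α|^n`. -/
theorem rnorm_deltaT (a b : ℤ) (hab : -a + 1 ≤ b) (hb : b ≤ -2)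
    (β : ℝ) (hβ : 1 < β) (hβroot : β ^ 3 = a * β ^ 2 + b * β + 1)
    (α : ℂ) (hαim : α.im ≠ 0) (hαroot : α ^ 3 = a * α ^ 2 + b * α + 1)
    (hαabs : ‖α‖ < 1) (n : ℕ) :
    rnorm b β α (deltaT a b β n) =
      rnorm b β α ![1 / β, 1 / β ^ 2] * ‖α‖ ^ n :=
  rnorm_deltaT_general a b β hβ hβroot α hαim hαroot n
end

section
/- There exists a bijective ℝ-linear map f : ℝ² → ℂ such that f(𝓔) = 𝓡 and f(ℤ²) = ℤ + ℤα = {p + qα : p, q ∈ ℤ}. -/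
open scoped BigOperators

/-- `𝓔 ⊂ ℝ²` is the closure of the set of points `δ(N)`, `N` a positive integer. -/
noncomputable def EcalSet (a b : ℤ) (β : ℝ) : Set (Fin 2 → ℝ) :=
  closure {x | ∃ N : ℕ, 0 < N ∧ ∃ d : ℕ → ℕ, IsAdmissible a b d ∧
    (N : ℤ) = ∑ᶠ i : ℕ, (d i : ℤ) * Tseq a b i ∧ x = deltaVec a b β N d}

/-! The map is `f x = -(1 + bα) x₀ - α x₁`. As the third root of `P` is `1 / (αβ)`,
`f (1/β, 1/β²) = α²`, and `α ^ (n + 2) = α² T_n + (1 + bα) T_{n-1} + α T_{n-2}`; together these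
give `f (δ N) = ∑ dᵢ α ^ (i + 2)`. Hence `f` maps the points `δ N` into `𝓡`, which is compact as a
continuous image of the compact space of admissible digit sequences, and the truncations of an
admissible sequence show that these images are dense in `𝓡`. Since `f` is a homeomorphism,
`f 𝓔 = 𝓡`. -/

theorem isClosed_of_forall_le_eq {X : Type*} [TopologicalSpace X] [DiscreteTopology X]
    {S : Set (ℕ → X)} (n : ℕ) (hS : ∀ d d', (∀ i ≤ n, d i = d' i) → d ∈ S → d' ∈ S) :
    IsClosed S := by
  let r : (ℕ → X) → Finset.range (n + 1) → X := (Finset.range (n + 1)).restrict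
  have hS' : S = r ⁻¹' (r '' S) := by
    refine (Set.subset_preimage_image r S).antisymm ?_
    rintro d' ⟨d, hd, hdd'⟩
    refine hS d d' (fun i hi => ?_) hd
    exact congrFun hdd' ⟨i, Finset.mem_range.2 (Nat.lt_succ_of_le hi)⟩
  rw [hS']
  exact (isClosed_discrete _).preimage (Finset.continuous_restrict _)

theorem isCompact_image_tsum_smul {E : Type*} [NormedAddCommGroup E] [CompleteSpace E]
    {D : Set (ℕ → ℕ)} (hD : IsClosed D) {M : ℕ} (hM : ∀ d ∈ D, ∀ i, d i ≤ M)
    {z : ℕ → E} (hz : Summable fun i => ‖z i‖) :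
    IsCompact ((fun d : ℕ → ℕ => ∑' i, d i • z i) '' D) := by
  have hDc : IsCompact D :=
    (isCompact_univ_pi fun _ => (Set.finite_Iic M).isCompact).of_isClosed_subset hD
      fun d hd i _ => hM d hd i
  refine hDc.image_of_continuousOn (continuousOn_tsum (u := fun i => M * ‖z i‖)
    (fun i => ((continuous_of_discreteTopology (f := fun m : ℕ => m • z i)).comp
      (continuous_apply i)).continuousOn)
    (hz.mul_left _) fun i d hd => ?_)
  calc ‖d i • z i‖ ≤ d i * ‖z i‖ := norm_nsmul_le
    _ ≤ M * ‖z i‖ := by gcongr; exact_mod_cast hM d hd i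

theorem finsum_eq_sum_range_of_eq_zero {M : Type*} [AddCommMonoid M] {u : ℕ → M} {K : ℕ}
    (h : ∀ i, K ≤ i → u i = 0) : ∑ᶠ i, u i = ∑ i ∈ Finset.range K, u i :=
  finsum_eq_sum_of_support_subset u fun i hi =>
    Finset.mem_coe.2 (Finset.mem_range.2 (not_le.1 fun hKi => hi (h i hKi)))

theorem exists_pos_natCast_eq_finsum {T : ℕ → ℤ} (hT : ∀ n, 0 < T n) {d : ℕ → ℕ}
    (hd : (Function.support d).Finite) {i : ℕ} (hi : d i ≠ 0) :
    ∃ N : ℕ, 0 < N ∧ (N : ℤ) = ∑ᶠ j, (d j : ℤ) * T j := by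
  have hfin : (Function.support fun j => (d j : ℤ) * T j).Finite :=
    hd.subset fun j hj => by simpa using left_ne_zero_of_mul hj
  have hpos : 0 < ∑ᶠ j, (d j : ℤ) * T j :=
    (mul_pos (by omega) (hT i)).trans_le
      (single_le_finsum i hfin fun j => mul_nonneg (Nat.cast_nonneg _) (hT j).le)
  exact ⟨(∑ᶠ j, (d j : ℤ) * T j).toNat, by omega, by omega⟩

theorem Complex.ofReal_add_ofReal_mul_eq_zero {u v : ℝ} {α : ℂ} (hα : α.im ≠ 0)
    (h : (u : ℂ) + v * α = 0) : u = 0 ∧ v = 0 := by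
  have hv : v = 0 := by simpa [hα] using congrArg Complex.im h
  subst hv
  simpa using h

-- The relation says that the third root of `X³ - aX² - bX - 1` is `1 / (xy)`.
theorem sq_mul_sq_add_mul_add_add_eq_zero {K : Type*} [Field K] {a b x y : K}
    (hx : x ^ 3 = a * x ^ 2 + b * x + 1) (hy : y ^ 3 = a * y ^ 2 + b * y + 1) (hxy : x ≠ y) :
    x ^ 2 * y ^ 2 + b * x * y + x + y = 0 := by
  have h : (x - y) * (x ^ 2 * y ^ 2 + b * x * y + x + y) = 0 := by
    linear_combination y ^ 2 * hx - x ^ 2 * hy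
  exact (mul_eq_zero.mp h).resolve_left (sub_ne_zero.mpr hxy)

namespace Tseq

variable {a b : ℤ}

theorem pos_and_lt_succ (hab : -a + 1 ≤ b) (hb : b < 0) (n : ℕ) :
    0 < Tseq a b n ∧ Tseq a b n < Tseq a b (n + 1) := by
  induction n using Nat.strong_induction_on with
  | _ n ih =>
    match n with
    | 0 => exact ⟨one_pos, show 1 < a by omega⟩
    | 1 => exact ⟨show 0 < a by omega, show a < a ^ 2 + b by nlinarith⟩
    | m + 2 =>
      obtain ⟨hm, -⟩ := ih m (by omega)
      obtain ⟨hm₁, hlt : Tseq a b (m + 1) < Tseq a b (m + 2)⟩ := ih (m + 1) (by omega)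
      refine ⟨by omega, ?_⟩
      show Tseq a b (m + 2) < a * Tseq a b (m + 2) + b * Tseq a b (m + 1) + Tseq a b m
      nlinarith [mul_le_mul_of_nonpos_left hlt.le hb.le]

theorem pos (hab : -a + 1 ≤ b) (hb : b < 0) (n : ℕ) : 0 < Tseq a b n :=
  (pos_and_lt_succ hab hb n).1

end Tseq

section Algebra

variable {R : Type*} [CommRing R] {a b : ℤ} {x : R}

theorem pow_add_four_eq_Tseq (hx : x ^ 3 = a * x ^ 2 + b * x + 1) (n : ℕ) :
    x ^ (n + 4) = x ^ 2 * Tseq a b (n + 2) + (1 + b * x) * Tseq a b (n + 1) + x * Tseq a b n := by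
  induction n with
  | zero => simp only [Tseq]; push_cast; linear_combination (x + a) * hx
  | succ n ih =>
    rw [show n + 1 + 2 = n + 3 from rfl, Tseq]
    push_cast
    linear_combination x * ih + (Tseq a b (n + 2) : R) * hx

theorem sum_range_mul_pow_eq_Tseq (hx : x ^ 3 = a * x ^ 2 + b * x + 1) (d : ℕ → ℕ) (K : ℕ) :
    ∑ i ∈ Finset.range (K + 2), (d i : R) * x ^ (i + 2) =
      x ^ 2 * ∑ i ∈ Finset.range (K + 2), (d i : R) * Tseq a b i +
        (1 + b * x) * ∑ j ∈ Finset.range (K + 1), (d (j + 1) : R) * Tseq a b j +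
        x * ∑ j ∈ Finset.range K, (d (j + 2) : R) * Tseq a b j := by
  induction K with
  | zero =>
    simp only [Finset.sum_range_succ, Finset.range_zero, Finset.sum_empty, Tseq]
    push_cast
    linear_combination (d 1 : R) * hx
  | succ K ih =>
    simp only [Finset.sum_range_succ] at ih ⊢
    linear_combination ih + (d (K + 2) : R) * pow_add_four_eq_Tseq hx K

end Algebra

namespace WordLe

variable {a b : ℤ} {d d' : ℕ → ℕ} {j k : ℕ}

theorem congr (h : ∀ i ≤ k, d (j - i) = d' (j - i)) (hd : WordLe a b d j k) :
    WordLe a b d' j k := by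
  rcases hd with H | ⟨m, hm, H1, H2⟩
  · exact Or.inl fun i hi => h i hi ▸ H i hi
  · exact Or.inr ⟨m, hm, fun i hi => h i (hi.le.trans hm) ▸ H1 i hi, h m hm ▸ H2⟩

theorem of_lt (h : (d j : ℤ) < a - 1) : WordLe a b d j k :=
  Or.inr ⟨0, k.zero_le, fun _ hi => absurd hi (Nat.not_lt_zero _), h⟩

end WordLe

theorem AdmissibleWord.le {a b : ℤ} {d : ℕ → ℕ} (hd : AdmissibleWord a b d) (j : ℕ) :
    (d j : ℤ) ≤ a - 1 := by
  rcases hd j 0 j.zero_le with H | ⟨m, hm, -, H⟩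
  · exact (H 0 le_rfl).le
  · obtain rfl : m = 0 := Nat.le_zero.mp hm
    exact H.le

-- Unlike plain truncation, the appended digit keeps `N > 0` even where `d` vanishes.
def truncOne (d : ℕ → ℕ) (K : ℕ) : ℕ → ℕ := fun i => if i < K then d i else if i = K then 1 else 0

theorem AdmissibleWord.truncOne {a b : ℤ} (ha : 2 < a) {d : ℕ → ℕ} (hd : AdmissibleWord a b d)
    (K : ℕ) : AdmissibleWord a b (truncOne d K) := by
  intro j k hk
  by_cases hj : j < K
  · exact (hd j k hk).congr fun i _ => by simp [_root_.truncOne, (j.sub_le i).trans_lt hj]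
  · refine WordLe.of_lt ?_
    simp only [_root_.truncOne, hj, if_false]
    split_ifs <;> omega

theorem truncOne_support_finite (d : ℕ → ℕ) (K : ℕ) : (Function.support (truncOne d K)).Finite :=
  (Set.finite_Iic K).subset fun i hi => by
    by_contra h
    simp only [Set.mem_Iic, not_le] at h
    simp [truncOne, Nat.not_lt_of_gt h, h.ne'] at hi

theorem tsum_truncOne_mul {R : Type*} [Semiring R] [TopologicalSpace R] (d : ℕ → ℕ) (K : ℕ)
    (z : ℕ → R) :
    ∑' i, (truncOne d K i : R) * z i = ∑ i ∈ Finset.range K, (d i : R) * z i + z K := by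
  rw [tsum_eq_sum (s := Finset.range (K + 1)) fun i hi => ?_, Finset.sum_range_succ]
  · simp only [truncOne, lt_irrefl, if_false, if_true, Nat.cast_one, one_mul]
    congr 1
    exact Finset.sum_congr rfl fun i hi => by simp [Finset.mem_range.1 hi]
  · simp only [Finset.mem_range, not_lt] at hi
    simp [truncOne, Nat.not_lt_of_ge (Nat.le_of_succ_le hi), (Nat.lt_of_succ_le hi).ne']

theorem isClosed_setOf_admissibleWord (a b : ℤ) : IsClosed {d : ℕ → ℕ | AdmissibleWord a b d} := by
  simp only [AdmissibleWord, Set.ofPred_forall]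
  refine isClosed_iInter fun j => isClosed_iInter fun k => isClosed_iInter fun hk =>
    isClosed_of_forall_le_eq j fun d d' h hd => hd.congr fun i _ => h _ (j.sub_le i)

theorem isClosed_rauzyFractal (a b : ℤ) {α : ℂ} (hα : ‖α‖ < 1) : IsClosed (RauzyFractal a b α) := by
  have hR : RauzyFractal a b α =
      (fun d : ℕ → ℕ => ∑' i, d i • α ^ (i + 2)) '' {d | AdmissibleWord a b d} := by
    ext z
    simp [RauzyFractal, nsmul_eq_mul, eq_comm]
  rw [hR]
  refine (isCompact_image_tsum_smul (isClosed_setOf_admissibleWord a b) (M := (a - 1).toNat)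
    (fun d hd i => by have := hd.le i; omega) ?_).isClosed
  exact (summable_nat_add_iff 2).2 (summable_norm_geometric_of_norm_lt_one hα)

noncomputable def rauzyMap (b : ℤ) (α : ℂ) : (Fin 2 → ℝ) →ₗ[ℝ] ℂ :=
  Fintype.linearCombination ℝ ![-1 - b * α, -α]

theorem rauzyMap_apply {b : ℤ} {α : ℂ} (x : Fin 2 → ℝ) :
    rauzyMap b α x = -(1 + b * α) * x 0 - α * x 1 := by
  simp only [rauzyMap, Fintype.linearCombination_apply, Complex.real_smul, Fin.sum_univ_two,
    Matrix.cons_val_zero, Matrix.cons_val_one, Matrix.cons_val_fin_one]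
  ring

theorem rauzyMap_bijective {b : ℤ} {α : ℂ} (hα : α.im ≠ 0) : Function.Bijective (rauzyMap b α) := by
  have hinj : Function.Injective (rauzyMap b α) := by
    refine linearIndependent_iff_injective_fintypeLinearCombination.mp
      (LinearIndependent.pair_iff.mpr fun s t hst => ?_)
    have h : ((s : ℝ) : ℂ) + ((s * b + t : ℝ) : ℂ) * α = 0 := by
      rw [Complex.real_smul, Complex.real_smul] at hst
      push_cast
      linear_combination -hst
    obtain ⟨hs, hst'⟩ := Complex.ofReal_add_ofReal_mul_eq_zero hα h
    exact ⟨hs, by linear_combination hst' - b * hs⟩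
  refine ⟨hinj, (LinearMap.injective_iff_surjective_of_finrank_eq_finrank ?_).mp hinj⟩
  simp [Complex.finrank_real_complex]

theorem rauzyMap_image_lattice (b : ℤ) (α : ℂ) :
    rauzyMap b α '' {x | ∃ g : Fin 2 → ℤ, x = fun i => (g i : ℝ)} =
      {z | ∃ p q : ℤ, z = (p : ℂ) + (q : ℂ) * α} := by
  ext z
  simp only [Set.mem_image, Set.mem_ofPred_eq]
  constructor
  · rintro ⟨-, ⟨g, rfl⟩, rfl⟩
    exact ⟨-g 0, -(b * g 0 + g 1), by rw [rauzyMap_apply]; push_cast; ring⟩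
  · rintro ⟨p, q, rfl⟩
    refine ⟨_, ⟨![-p, b * p - q], rfl⟩, ?_⟩
    rw [rauzyMap_apply]
    simp only [Matrix.cons_val_zero, Matrix.cons_val_one, Matrix.cons_val_fin_one]
    push_cast
    ring

theorem rauzyMap_deltaVec {a b : ℤ} {β : ℝ} (hβ : β ^ 3 = a * β ^ 2 + b * β + 1) {α : ℂ}
    (hα : α ^ 3 = a * α ^ 2 + b * α + 1) (hαβ : α ≠ β) {d : ℕ → ℕ}
    (hd : (Function.support d).Finite) {N : ℕ} (hN : (N : ℤ) = ∑ᶠ i, (d i : ℤ) * Tseq a b i) :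
    rauzyMap b α (deltaVec a b β N d) = ∑' i, (d i : ℂ) * α ^ (i + 2) := by
  obtain ⟨K, hK⟩ : ∃ K, ∀ i, K ≤ i → d i = 0 := by
    obtain ⟨M, hM⟩ := hd.bddAbove
    exact ⟨M + 1, fun i hi => Function.notMem_support.1 fun h => by have := hM h; omega⟩
  have hβ' : (β : ℂ) ^ 3 = a * (β : ℂ) ^ 2 + b * β + 1 := by exact_mod_cast hβ
  have hβ0 : (β : ℂ) ≠ 0 := fun h => by simp [h] at hβ'
  have hvieta := sq_mul_sq_add_mul_add_add_eq_zero hα hβ' hαβ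
  have hNC : (N : ℂ) = ∑ i ∈ Finset.range (K + 2), (d i : ℂ) * Tseq a b i := by
    rw [finsum_eq_sum_range_of_eq_zero (K := K + 2) fun i hi => by simp [hK i (by omega)]] at hN
    exact_mod_cast congrArg (Int.cast : ℤ → ℂ) hN
  rw [tsum_eq_sum (s := Finset.range (K + 2)) fun i hi => by
      simp [hK i (by simp at hi; omega)],
    sum_range_mul_pow_eq_Tseq hα d K, rauzyMap_apply, deltaVec,
    finsum_eq_sum_range_of_eq_zero (K := K + 1) fun i hi => by simp [hK (i + 1) (by omega)],
    finsum_eq_sum_range_of_eq_zero (K := K) fun i hi => by simp [hK (i + 2) (by omega)]]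
  simp only [Matrix.cons_val_zero, Matrix.cons_val_one, Matrix.cons_val_fin_one]
  push_cast
  field_simp
  linear_combination (-(N : ℂ)) * hvieta + α ^ 2 * β ^ 2 * hNC

def deltaSet (a b : ℤ) (β : ℝ) : Set (Fin 2 → ℝ) :=
  {x | ∃ N : ℕ, 0 < N ∧ ∃ d : ℕ → ℕ, IsAdmissible a b d ∧
    (N : ℤ) = ∑ᶠ i : ℕ, (d i : ℤ) * Tseq a b i ∧ x = deltaVec a b β N d}

section Rauzy

variable {a b : ℤ} {β : ℝ} {α : ℂ}

theorem rauzyMap_image_deltaSet_subset (hβ : β ^ 3 = a * β ^ 2 + b * β + 1)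
    (hα : α ^ 3 = a * α ^ 2 + b * α + 1) (hαβ : α ≠ β) :
    rauzyMap b α '' deltaSet a b β ⊆ RauzyFractal a b α := by
  rintro _ ⟨_, ⟨N, -, d, ⟨hfin, hadm⟩, hN, rfl⟩, rfl⟩
  exact ⟨d, hadm, rauzyMap_deltaVec hβ hα hαβ hfin hN⟩

theorem rauzyFractal_subset_closure (hab : -a + 1 ≤ b) (hb : b ≤ -2)
    (hβ : β ^ 3 = a * β ^ 2 + b * β + 1) (hα : α ^ 3 = a * α ^ 2 + b * α + 1) (hαβ : α ≠ β)
    (hα1 : ‖α‖ < 1) : RauzyFractal a b α ⊆ closure (rauzyMap b α '' deltaSet a b β) := by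
  rintro _ ⟨d, hd, rfl⟩
  have hmem (K : ℕ) : ∑ i ∈ Finset.range K, (d i : ℂ) * α ^ (i + 2) + α ^ (K + 2) ∈
      rauzyMap b α '' deltaSet a b β := by
    have hfin := truncOne_support_finite d K
    obtain ⟨N, hN0, hN⟩ :=
      exists_pos_natCast_eq_finsum (Tseq.pos hab (by omega)) hfin (i := K) (by simp [truncOne])
    refine ⟨_, ⟨N, hN0, truncOne d K, ⟨hfin, hd.truncOne (by omega) K⟩, hN, rfl⟩, ?_⟩
    rw [rauzyMap_deltaVec hβ hα hαβ hfin hN, tsum_truncOne_mul]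
  have hsum : Summable fun i => (d i : ℂ) * α ^ (i + 2) := by
    refine Summable.of_norm_bounded
      (((summable_nat_add_iff 2).2 (summable_norm_geometric_of_norm_lt_one hα1)).mul_left
        ((a - 1).toNat : ℝ)) fun i => ?_
    rw [norm_mul, Complex.norm_natCast]
    gcongr
    have := hd.le i
    exact_mod_cast (show d i ≤ (a - 1).toNat by omega)
  have hlim : Filter.Tendsto (fun K => ∑ i ∈ Finset.range K, (d i : ℂ) * α ^ (i + 2) + α ^ (K + 2))
      Filter.atTop (nhds (∑' i, (d i : ℂ) * α ^ (i + 2))) := by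
    simpa [pow_add] using hsum.hasSum.tendsto_sum_nat.add
      ((tendsto_pow_atTop_nhds_zero_of_norm_lt_one hα1).mul_const (α ^ 2))
  exact mem_closure_of_tendsto hlim (Filter.Eventually.of_forall hmem)

end Rauzy

theorem exists_linear_map_Ecal_to_Rauzy_general (a b : ℤ) (hab : -a + 1 ≤ b) (hb : b ≤ -2)
    (β : ℝ) (hβroot : β ^ 3 = a * β ^ 2 + b * β + 1)
    (α : ℂ) (hαim : α.im ≠ 0) (hαroot : α ^ 3 = a * α ^ 2 + b * α + 1)
    (hαabs : ‖α‖ < 1) :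
    ∃ f : (Fin 2 → ℝ) →ₗ[ℝ] ℂ, Function.Bijective f ∧
      f '' EcalSet a b β = RauzyFractal a b α ∧
      f '' {x | ∃ g : Fin 2 → ℤ, x = fun i => (g i : ℝ)} =
        {z | ∃ p q : ℤ, z = (p : ℂ) + (q : ℂ) * α} := by
  have hαβ : α ≠ β := fun h => hαim (h ▸ Complex.ofReal_im β)
  have hf := rauzyMap_bijective (b := b) hαim
  refine ⟨rauzyMap b α, hf, ?_, rauzyMap_image_lattice b α⟩
  let e := (LinearEquiv.ofBijective _ hf).toContinuousLinearEquiv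
  rw [EcalSet, ← deltaSet, show ⇑(rauzyMap b α) = e from rfl, e.image_closure]
  exact (closure_minimal (rauzyMap_image_deltaSet_subset hβroot hαroot hαβ)
    (isClosed_rauzyFractal a b hαabs)).antisymm
    (rauzyFractal_subset_closure hab hb hβroot hαroot hαβ hαabs)

/-- There exists a bijective ℝ-linear map `f : ℝ² → ℂ` with `f(𝓔) = 𝓡` and
`f(ℤ²) = ℤ + ℤα`. -/
theorem exists_linear_map_Ecal_to_Rauzy (a b : ℤ) (hab : -a + 1 ≤ b) (hb : b ≤ -2)
    (β : ℝ) (hβ : 1 < β) (hβroot : β ^ 3 = a * β ^ 2 + b * β + 1)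
    (α : ℂ) (hαim : α.im ≠ 0) (hαroot : α ^ 3 = a * α ^ 2 + b * α + 1)
    (hαabs : ‖α‖ < 1) :
    ∃ f : (Fin 2 → ℝ) →ₗ[ℝ] ℂ, Function.Bijective f ∧
      f '' EcalSet a b β = RauzyFractal a b α ∧
      f '' {x | ∃ g : Fin 2 → ℤ, x = fun i => (g i : ℝ)} =
        {z | ∃ p q : ℤ, z = (p : ℂ) + (q : ℂ) * α} :=
  exists_linear_map_Ecal_to_Rauzy_general a b hab hb β hβroot α hαim hαroot hαabs
end
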